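/- arXiv:1608.08528 — 11 statements merged into one kernel-verified Lean document; each statement's English description precedes it below -/
import Mathlib

section
/- Let S ⊆ ℕ^p be an affine semigroup whose minimal generating set is {s₁, …, s_t}, let i ∈ {1, …, t}, and let S′ be the submonoid of ℕ^p generated by {s₁, …, s_{i−1}, s_{i+1}, …, s_t, 2s_i, 3s_i} ∪ {s_i + s_j : j ∈ {1, …, t}, j ≠ i}. Then S′ = S \ {s_i}. -/
/-- `S ⊆ ℕ^p` contains `0` and is closed under addition. -/
def IsSubmonoidSet {p : ℕ} (S : Set (Fin p → ℕ)) : Prop :=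
  (0 : Fin p → ℕ) ∈ S ∧ ∀ x ∈ S, ∀ y ∈ S, x + y ∈ S

/-- `s` is a minimal generator of `S`: it is a nonzero element of `S` that is not a
sum of two nonzero elements of `S`. -/
def IsMinGen {p : ℕ} (S : Set (Fin p → ℕ)) (s : Fin p → ℕ) : Prop :=
  s ∈ S ∧ s ≠ 0 ∧ ∀ a ∈ S, ∀ b ∈ S, a ≠ 0 → b ≠ 0 → a + b ≠ s

/-- The (unique) minimal generating set of `S`. -/
def minGens {p : ℕ} (S : Set (Fin p → ℕ)) : Set (Fin p → ℕ) :=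
  {s | IsMinGen S s}

/-!
Write `a = s i` and `S'` for the submonoid generated by the new generators. As `a` is a minimal
generator, `S \ {a}` is closed under addition, and every new generator (`b`, `2a`, `3a`, `a + b`
for generators `b ≠ a`) is a sum of two nonzero elements of `S`; hence `S' ⊆ S \ {a}`.
Conversely `a + g ∈ S'` for every new generator `g` (it is `a + b`, `3a`, `2a + 2a` or `2a + b`),
hence `a + y ∈ S'` for every nonzero `y ∈ S'`. So `S' ∪ {a}` is closed under addition
(`a + a = 2a`) and contains every generator of `S`, whence `S \ {a} ⊆ S'`.
-/

/-- The generating set of the paper's `S′`. -/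
def genSetErase {M ι : Type*} [AddCommMonoid M] (s : ι → M) (i : ι) : Set M :=
  (Set.range s \ {s i} ∪ {(2 : ℕ) • s i, (3 : ℕ) • s i}) ∪
    {x | ∃ j, j ≠ i ∧ x = s i + s j}

theorem IsMinGen.add_mem_diff {p : ℕ} {S : AddSubmonoid (Fin p → ℕ)} {a x y : Fin p → ℕ}
    (ha : IsMinGen S a) (hx : x ∈ S) (hy : y ∈ S) (hx0 : x ≠ 0) (hy0 : y ≠ 0) :
    x + y ∈ (S : Set (Fin p → ℕ)) \ {a} :=
  ⟨add_mem hx hy, ha.2.2 x hx y hy hx0 hy0⟩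

namespace AddSubmonoid

section AddCommMonoid

variable {M : Type*} [AddCommMonoid M]

theorem add_mem_closure_of_forall_add_mem {T : Set M} {a : M}
    (hT : ∀ g ∈ T, a + g ∈ closure T) {y : M} (hy : y ∈ closure T) (hy0 : y ≠ 0) :
    a + y ∈ closure T := by
  suffices y = 0 ∨ a + y ∈ closure T from this.resolve_left hy0
  clear hy0
  induction hy using closure_induction with
  | mem g hg => exact .inr (hT g hg)
  | zero => exact .inl rfl
  | add b c _ hc hb _ =>
    rcases hb with rfl | hb
    · rwa [zero_add]
    · exact .inr (add_assoc a b c ▸ add_mem hb hc)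

theorem closure_subset_insert_of_add_mem {A : Set M} {a : M} {N : AddSubmonoid M}
    (hA : A \ {a} ⊆ N) (h2 : (2 : ℕ) • a ∈ N) (hN : ∀ y ∈ N, y ≠ 0 → a + y ∈ N) :
    (closure A : Set M) ⊆ insert a N := by
  have hadd : ∀ y ∈ insert a (N : Set M), a + y ∈ insert a (N : Set M) := by
    rintro y (rfl | hy)
    · exact .inr (two_nsmul y ▸ h2)
    · rcases eq_or_ne y 0 with rfl | hy0
      · exact .inl (add_zero a)
      · exact .inr (hN y hy hy0)
  intro x hx
  induction hx using closure_induction with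
  | mem x hx => exact (em (x = a)).elim .inl fun hxa => .inr (hA ⟨hx, hxa⟩)
  | zero => exact .inr N.zero_mem
  | add x y _ _ hx hy =>
    rcases hx with rfl | hx
    · exact hadd y hy
    rcases hy with rfl | hy
    · exact add_comm y x ▸ hadd x (.inr hx)
    · exact .inr (add_mem hx hy)

theorem add_mem_closure_genSetErase {ι : Type*} (s : ι → M) (i : ι) :
    ∀ g ∈ genSetErase s i, s i + g ∈ closure (genSetErase s i) := by
  have h2 : (2 : ℕ) • s i ∈ closure (genSetErase s i) :=
    subset_closure (Or.inl (Or.inr (Or.inl rfl)))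
  have h3 : (3 : ℕ) • s i ∈ closure (genSetErase s i) :=
    subset_closure (Or.inl (Or.inr (Or.inr rfl)))
  rintro g ((⟨⟨j, rfl⟩, hj⟩ | rfl | rfl) | ⟨j, hj, rfl⟩)
  · exact subset_closure (Or.inr ⟨j, fun h => hj (h ▸ rfl), rfl⟩)
  · rwa [← succ_nsmul']
  · rw [← succ_nsmul', show 3 + 1 = 2 + 2 from rfl, add_nsmul]
    exact add_mem h2 h2
  · rw [← add_assoc, ← two_nsmul]
    by_cases hji : s j = s i
    · rwa [hji, ← succ_nsmul]
    · exact add_mem h2 (subset_closure (Or.inl (Or.inl ⟨⟨j, rfl⟩, hji⟩)))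

theorem closure_range_diff_subset_closure_genSetErase {ι : Type*} (s : ι → M) (i : ι) :
    (closure (Set.range s) : Set M) \ {s i} ⊆ closure (genSetErase s i) := by
  rintro x ⟨hx, hxi⟩
  refine (closure_subset_insert_of_add_mem ?_ ?_ ?_ hx).resolve_left hxi
  · exact fun g hg => subset_closure (Or.inl (Or.inl hg))
  · exact subset_closure (Or.inl (Or.inr (Or.inl rfl)))
  · exact fun y => add_mem_closure_of_forall_add_mem (add_mem_closure_genSetErase s i)

end AddCommMonoid

section MinGen

variable {p : ℕ}

def eraseMinGen (S : AddSubmonoid (Fin p → ℕ)) {a : Fin p → ℕ} (ha : IsMinGen S a) :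
    AddSubmonoid (Fin p → ℕ) where
  carrier := (S : Set (Fin p → ℕ)) \ {a}
  zero_mem' := ⟨S.zero_mem, fun h => ha.2.1 (Set.mem_singleton_iff.1 h).symm⟩
  add_mem' {x y} hx hy := by
    rcases eq_or_ne x 0 with rfl | hx0
    · rwa [zero_add]
    rcases eq_or_ne y 0 with rfl | hy0
    · rwa [add_zero]
    exact ha.add_mem_diff hx.1 hy.1 hx0 hy0

theorem genSetErase_subset_closure_range_diff {t : ℕ} {s : Fin t → Fin p → ℕ}
    (hs : ∀ j, IsMinGen (closure (Set.range s) : Set (Fin p → ℕ)) (s j)) (i : Fin t) :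
    genSetErase s i ⊆ (closure (Set.range s) : Set (Fin p → ℕ)) \ {s i} := by
  have hmem j : s j ∈ closure (Set.range s) := subset_closure (Set.mem_range_self j)
  have h2 : (2 : ℕ) • s i ≠ 0 := smul_ne_zero two_ne_zero (hs i).2.1
  rintro g ((⟨⟨j, rfl⟩, hj⟩ | rfl | rfl) | ⟨j, -, rfl⟩)
  · exact ⟨hmem j, hj⟩
  · rw [two_nsmul]
    exact (hs i).add_mem_diff (hmem i) (hmem i) (hs i).2.1 (hs i).2.1
  · rw [succ_nsmul']
    exact (hs i).add_mem_diff (hmem i) (nsmul_mem (hmem i) 2) (hs i).2.1 h2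
  · exact (hs i).add_mem_diff (hmem i) (hmem j) (hs i).2.1 (hs j).2.1

theorem closure_genSetErase {t : ℕ} {s : Fin t → Fin p → ℕ}
    (hs : ∀ j, IsMinGen (closure (Set.range s) : Set (Fin p → ℕ)) (s j)) (i : Fin t) :
    (closure (genSetErase s i) : Set (Fin p → ℕ)) = (closure (Set.range s) : Set _) \ {s i} :=
  subset_antisymm
    (closure_le (S := eraseMinGen _ (hs i)).2 (genSetErase_subset_closure_range_diff hs i))
    (closure_range_diff_subset_closure_genSetErase s i)

end MinGen

end AddSubmonoid

theorem stmt0_general {p t : ℕ} (S : Set (Fin p → ℕ))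
    (s : Fin t → (Fin p → ℕ))
    (hgen : S = (AddSubmonoid.closure (Set.range s) : Set (Fin p → ℕ)))
    (hmin : minGens S = Set.range s) (i : Fin t) :
    ((AddSubmonoid.closure
        ((Set.range s \ {s i} ∪ {(2 : ℕ) • s i, (3 : ℕ) • s i})
          ∪ {x | ∃ j : Fin t, j ≠ i ∧ x = s i + s j}) :
        AddSubmonoid (Fin p → ℕ)) : Set (Fin p → ℕ))
      = S \ {s i} := by
  have hs j : IsMinGen S (s j) := (hmin.symm ▸ Set.mem_range_self j : s j ∈ minGens S)
  subst hgen
  exact AddSubmonoid.closure_genSetErase hs i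

theorem stmt0 {p t : ℕ} (hp : 1 ≤ p) (S : Set (Fin p → ℕ))
    (s : Fin t → (Fin p → ℕ)) (hinj : Function.Injective s)
    (hgen : S = (AddSubmonoid.closure (Set.range s) : Set (Fin p → ℕ)))
    (hmin : minGens S = Set.range s) (i : Fin t) :
    ((AddSubmonoid.closure
        ((Set.range s \ {s i} ∪ {(2 : ℕ) • s i, (3 : ℕ) • s i})
          ∪ {x | ∃ j : Fin t, j ≠ i ∧ x = s i + s j}) :
        AddSubmonoid (Fin p → ℕ)) : Set (Fin p → ℕ))
      = S \ {s i} :=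
  stmt0_general S s hgen hmin i
end

section
/- Let S ⊆ ℕ^p be an affine semigroup whose minimal generating set is {s₁, …, s_t}, let i ∈ {1, …, t}, and let S′ be the submonoid of ℕ^p generated by {s₁, …, s_{i−1}, s_{i+1}, …, s_t, 2s_i, 3s_i} ∪ {s_i + s_j : j ∈ {1, …, t}, j ≠ i}. Then every element of {s₁, …, s_{i−1}, s_{i+1}, …, s_t} is a minimal generator of S′. -/
theorem stmt1 {p t : ℕ} (hp : 1 ≤ p) (S : Set (Fin p → ℕ))
    (s : Fin t → (Fin p → ℕ)) (hinj : Function.Injective s)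
    (hgen : S = (AddSubmonoid.closure (Set.range s) : Set (Fin p → ℕ)))
    (hmin : minGens S = Set.range s) (i : Fin t) :
    ∀ j : Fin t, j ≠ i →
      IsMinGen
        ((AddSubmonoid.closure
            ((Set.range s \ {s i} ∪ {(2 : ℕ) • s i, (3 : ℕ) • s i})
              ∪ {x | ∃ j' : Fin t, j' ≠ i ∧ x = s i + s j'}) :
            AddSubmonoid (Fin p → ℕ)) : Set (Fin p → ℕ))
        (s j) := by
  intro j hj
  have hjm : IsMinGen S (s j) := by
    have : s j ∈ minGens S := by rw [hmin]; exact ⟨j, rfl⟩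
    exact this
  obtain ⟨hjS, hjne, hjmin⟩ := hjm
  set G : Set (Fin p → ℕ) :=
    (Set.range s \ {s i} ∪ {(2 : ℕ) • s i, (3 : ℕ) • s i})
      ∪ {x | ∃ j' : Fin t, j' ≠ i ∧ x = s i + s j'} with hG
  have hsiS : s i ∈ AddSubmonoid.closure (Set.range s) :=
    AddSubmonoid.subset_closure ⟨i, rfl⟩
  have hGsub : G ⊆ (AddSubmonoid.closure (Set.range s) : Set (Fin p → ℕ)) := by
    rintro x hx
    rcases hx with (⟨hx, -⟩ | hx) | ⟨j', -, rfl⟩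
    · exact AddSubmonoid.subset_closure hx
    · rcases hx with rfl | rfl
      · exact AddSubmonoid.nsmul_mem _ hsiS 2
      · exact AddSubmonoid.nsmul_mem _ hsiS 3
    · exact AddSubmonoid.add_mem _ hsiS (AddSubmonoid.subset_closure ⟨j', rfl⟩)
  have hsub : (AddSubmonoid.closure G : Set (Fin p → ℕ)) ⊆ S := by
    rw [hgen]
    exact AddSubmonoid.closure_le.mpr hGsub
  refine ⟨AddSubmonoid.subset_closure ?_, hjne, ?_⟩
  · exact Or.inl (Or.inl ⟨⟨j, rfl⟩, fun h => hj (hinj h)⟩)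
  · intro a ha b hb hane hbne
    exact hjmin a (hsub ha) b (hsub hb) hane hbne
end

section
/- Fix a monomial order ≺ on ℕ^p whose initial segments are finite, and let C ⊆ ℚ₊^p be a rational cone. If S is a C-semigroup with H(S) nonempty, then S ∪ {Fb(S)} is again a C-semigroup (in particular it is closed under addition), and Fb(S) is a minimal generator of S ∪ {Fb(S)} that is greater, with respect to ≺, than every gap of S ∪ {Fb(S)}; consequently S is an effective son of S ∪ {Fb(S)}. -/
/-- `prec` is (the strict part of) a monomial order on `ℕ^p` all of whose initial
segments are finite. -/
def IsMonomialOrder {p : ℕ} (prec : (Fin p → ℕ) → (Fin p → ℕ) → Prop) : Prop :=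
  (∀ a, ¬ prec a a) ∧
  (∀ a b c, prec a b → prec b c → prec a c) ∧
  (∀ a b, a ≠ b → prec a b ∨ prec b a) ∧
  (∀ a b c, prec a b → prec (a + c) (b + c)) ∧
  (∀ c, c ≠ (0 : Fin p → ℕ) → prec 0 c) ∧
  (∀ a, {b | prec b a}.Finite)

/-- The canonical embedding `ℕ^p → ℚ^p`. -/
def toQ {p : ℕ} (x : Fin p → ℕ) : Fin p → ℚ := fun i => (x i : ℚ)

/-- `C` is a finitely generated rational cone contained in `ℚ₊^p`. -/
def IsRationalCone {p : ℕ} (C : Set (Fin p → ℚ)) : Prop :=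
  (∀ x ∈ C, ∀ i, 0 ≤ x i) ∧
  ∃ (n : ℕ) (v : Fin n → (Fin p → ℚ)),
    C = {x | ∃ c : Fin n → ℚ, (∀ i, 0 ≤ c i) ∧ x = ∑ i, c i • v i}

theorem stmt4 {p : ℕ} (hp : 1 ≤ p)
    (prec : (Fin p → ℕ) → (Fin p → ℕ) → Prop) (hprec : IsMonomialOrder prec)
    (C : Set (Fin p → ℚ)) (hC : IsRationalCone C)
    (S : Set (Fin p → ℕ)) (hS : IsSubmonoidSet S)
    (hSC : ∀ x ∈ S, toQ x ∈ C)
    (hgaps : {x : Fin p → ℕ | toQ x ∈ C ∧ x ∉ S}.Finite)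
    (Fb : Fin p → ℕ)
    (hFb : (toQ Fb ∈ C ∧ Fb ∉ S) ∧
      ∀ x : Fin p → ℕ, toQ x ∈ C → x ∉ S → x ≠ Fb → prec x Fb) :
    IsSubmonoidSet (S ∪ {Fb}) ∧
    (∀ x ∈ S ∪ {Fb}, toQ x ∈ C) ∧
    {x : Fin p → ℕ | toQ x ∈ C ∧ x ∉ S ∪ {Fb}}.Finite ∧
    IsMinGen (S ∪ {Fb}) Fb ∧
    (∀ x : Fin p → ℕ, toQ x ∈ C → x ∉ S ∪ {Fb} → prec x Fb) ∧
    S = (S ∪ {Fb}) \ {Fb} := by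
  obtain ⟨hirr, htrans, htot, hadd, hzero, hfin⟩ := hprec
  obtain ⟨⟨hFbC, hFbS⟩, hmax⟩ := hFb
  obtain ⟨hS0, hSadd⟩ := hS
  obtain ⟨hCpos, n, v, hCeq⟩ := hC
  have hFbne : Fb ≠ 0 := fun h => hFbS (h ▸ hS0)
  -- C is closed under addition
  have hCadd : ∀ x ∈ C, ∀ y ∈ C, x + y ∈ C := by
    intro x hx y hy
    rw [hCeq] at hx hy ⊢
    obtain ⟨c, hc, rfl⟩ := hx
    obtain ⟨d, hd, rfl⟩ := hy
    exact ⟨c + d, fun i => add_nonneg (hc i) (hd i), by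
      simp [add_smul, Finset.sum_add_distrib]⟩
  have htoQadd : ∀ x y : Fin p → ℕ, toQ (x + y) = toQ x + toQ y := by
    intro x y; funext i; simp [toQ]
  have hmemC : ∀ x ∈ S ∪ {Fb}, toQ x ∈ C := by
    intro x hx
    rcases hx with hx | hx
    · exact hSC x hx
    · rw [Set.mem_singleton_iff] at hx; subst hx; exact hFbC
  -- Fb + y ∈ S ∪ {Fb} for y ∈ S ∪ {Fb}
  have key : ∀ y ∈ S ∪ {Fb}, y ≠ 0 → Fb + y ∈ S := by
    intro y hy hyne
    by_contra h
    have hC' : toQ (Fb + y) ∈ C := by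
      rw [htoQadd]; exact hCadd _ hFbC _ (hmemC y hy)
    have hne : Fb + y ≠ Fb := by
      intro he
      exact hyne (by simpa using (left_eq_add.mp he.symm))
    have h1 : prec (Fb + y) Fb := hmax _ hC' h hne
    have h2 : prec Fb (Fb + y) := by
      have := hadd 0 y Fb (hzero y hyne)
      simpa [add_comm] using this
    exact hirr _ (htrans _ _ _ h1 h2)
  have hUadd : ∀ x ∈ S ∪ {Fb}, ∀ y ∈ S ∪ {Fb}, x + y ∈ S ∪ {Fb} := by
    intro x hx y hy
    rcases hx with hx | hx
    · rcases hy with hy | hy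
      · exact Or.inl (hSadd x hx y hy)
      · rw [Set.mem_singleton_iff] at hy; subst hy
        by_cases hxne : x = 0
        · subst hxne; simp
        · rw [add_comm]; exact Or.inl (key x (Or.inl hx) hxne)
    · rw [Set.mem_singleton_iff] at hx; subst hx
      by_cases hyne : y = 0
      · subst hyne; simpa using hy
      · exact Or.inl (key y hy hyne)
  refine ⟨⟨Or.inl hS0, hUadd⟩, hmemC, ?_, ?_, ?_, ?_⟩
  · exact hgaps.subset fun x ⟨h1, h2⟩ => ⟨h1, fun hs => h2 (Or.inl hs)⟩
  · refine ⟨Or.inr rfl, hFbne, ?_⟩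
    intro a ha b hb hane hbne hab
    rcases ha with ha | ha
    · rcases hb with hb | hb
      · exact hFbS (hab ▸ hSadd a ha b hb)
      · rw [Set.mem_singleton_iff] at hb; subst hb
        have : a = 0 := by
          have := hab
          rw [add_comm] at this
          simpa using left_eq_add.mp this.symm
        exact hane this
    · rw [Set.mem_singleton_iff] at ha; subst ha
      exact hbne (by simpa using left_eq_add.mp hab.symm)
  · intro x hxC hx
    have hxS : x ∉ S := fun h => hx (Or.inl h)
    have hxne : x ≠ Fb := fun h => hx (Or.inr h)
    exact hmax x hxC hxS hxne
  · ext x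
    simp only [Set.mem_diff, Set.mem_union, Set.mem_singleton_iff]
    constructor
    · intro hx; exact ⟨Or.inl hx, fun h => hFbS (h ▸ hx)⟩
    · rintro ⟨hx | hx, hne⟩
      · exact hx
      · exact absurd hx hne
end

section
/- Let p ≥ 2 and let S be an ℕ^p-semigroup with S ≠ ℕ^p whose embedding dimension equals 2p. Then there exist i ∈ {1, …, p}, natural numbers λ₁, λ₂ with gcd(λ₁, λ₂) = 1, and natural numbers q_j for j ∈ {1, …, p} \ {i}, such that the minimal generating set of S is {e₁, …, e_{i−1}, e_{i+1}, …, e_p, λ₁e_i, λ₂e_i} ∪ {e_i + q_j e_j : j ∈ {1, …, p}, j ≠ i}. -/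
/-- Minimal generator of a subset of `ℕ`. -/
def NatMinGen (T : Set ℕ) (k : ℕ) : Prop :=
  k ∈ T ∧ k ≠ 0 ∧ ∀ a ∈ T, ∀ b ∈ T, a ≠ 0 → b ≠ 0 → a + b ≠ k

lemma natMinGen_exists (T : Set ℕ) (hex : ∃ k, k ≠ 0 ∧ k ∈ T) : ∃ m, NatMinGen T m := by
  classical
  refine ⟨Nat.find hex, (Nat.find_spec hex).2, (Nat.find_spec hex).1, ?_⟩
  intro a ha b hb ha0 hb0 hab
  have hma : Nat.find hex ≤ a := le_of_not_gt fun h => Nat.find_min hex h ⟨ha0, ha⟩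
  have hmb : Nat.find hex ≤ b := le_of_not_gt fun h => Nat.find_min hex h ⟨hb0, hb⟩
  omega

lemma natMinGen_two (T : Set ℕ) (h1 : 1 ∉ T) (hcof : ∃ N, ∀ n, N ≤ n → n ∈ T) :
    ∃ m u, m ≠ u ∧ NatMinGen T m ∧ NatMinGen T u := by
  classical
  obtain ⟨N, hN⟩ := hcof
  have hex : ∃ k, k ≠ 0 ∧ k ∈ T := ⟨N + 1, Nat.succ_ne_zero N, hN _ (Nat.le_succ N)⟩
  have hmspec := Nat.find_spec hex
  set m := Nat.find hex with hm_def
  have hm_min : ∀ k, k < m → ¬(k ≠ 0 ∧ k ∈ T) := fun k hk => Nat.find_min hex hk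
  have hm2 : 2 ≤ m := by
    have h0 : m ≠ 0 := hmspec.1
    have h1' : m ≠ 1 := by intro h; exact h1 (h ▸ hmspec.2)
    omega
  have hgenm : NatMinGen T m := by
    refine ⟨hmspec.2, hmspec.1, ?_⟩
    intro a ha b hb ha0 hb0 hab
    have hA : m ≤ a := le_of_not_gt fun h => hm_min a h ⟨ha0, ha⟩
    have hB : m ≤ b := le_of_not_gt fun h => hm_min b h ⟨hb0, hb⟩
    omega
  have hex2 : ∃ k, ¬ m ∣ k ∧ k ∈ T := by
    refine ⟨m * N + 1, ?_, hN _ ?_⟩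
    · intro hd
      have h1d : m ∣ 1 := (Nat.dvd_add_right ⟨N, rfl⟩).mp hd
      have := Nat.le_of_dvd one_pos h1d
      omega
    · have : N ≤ m * N := Nat.le_mul_of_pos_left N (by omega)
      omega
  have huspec := Nat.find_spec hex2
  set u := Nat.find hex2 with hu_def
  have hu_min : ∀ k, k < u → ¬(¬ m ∣ k ∧ k ∈ T) := fun k hk => Nat.find_min hex2 hk
  refine ⟨m, u, ?_, hgenm, huspec.2, ?_, ?_⟩
  · intro h; exact huspec.1 (h ▸ dvd_refl m)
  · intro h0; exact huspec.1 (h0 ▸ dvd_zero m)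
  · intro a ha b hb ha0 hb0 hab
    by_cases hda : m ∣ a
    · by_cases hdb : m ∣ b
      · exact huspec.1 (hab ▸ dvd_add hda hdb)
      · exact hu_min b (by omega) ⟨hdb, hb⟩
    · exact hu_min a (by omega) ⟨hda, ha⟩

lemma dvd_of_sparse (T : Set ℕ) (m u : ℕ) (hgen : ∀ k, NatMinGen T k → k = m ∨ k = u) :
    ∀ k ∈ T, Nat.gcd m u ∣ k := by
  intro k
  induction k using Nat.strong_induction_on with
  | _ k ih =>
    intro hk
    by_cases h0 : k = 0
    · simp [h0]
    by_cases hmin : NatMinGen T k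
    · rcases hgen k hmin with rfl | rfl
      · exact Nat.gcd_dvd_left _ _
      · exact Nat.gcd_dvd_right _ _
    · have hsum : ∃ a ∈ T, ∃ b ∈ T, a ≠ 0 ∧ b ≠ 0 ∧ a + b = k := by
        by_contra hc
        push_neg at hc
        exact hmin ⟨hk, h0, fun a ha b hb ha0 hb0 => (hc a ha b hb ha0 hb0)⟩
      obtain ⟨a, ha, b, hb, ha0, hb0, hab⟩ := hsum
      have d1 := ih a (by omega) ha
      have d2 := ih b (by omega) hb
      exact hab ▸ dvd_add d1 d2

lemma gcd_eq_one_of_sparse (T : Set ℕ) (m u : ℕ)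
    (hgen : ∀ k, NatMinGen T k → k = m ∨ k = u)
    (hcof : ∃ N, ∀ n, N ≤ n → n ∈ T) : Nat.gcd m u = 1 := by
  obtain ⟨N, hN⟩ := hcof
  have d1 := dvd_of_sparse T m u hgen N (hN _ le_rfl)
  have d2 := dvd_of_sparse T m u hgen (N + 1) (hN _ (Nat.le_succ N))
  have : Nat.gcd m u ∣ 1 := (Nat.dvd_add_right d1).mp d2
  exact Nat.dvd_one.mp this

section Bridge
variable {p : ℕ}

lemma my_single_add (i : Fin p) (a b : ℕ) :
    (Pi.single i (a+b) : Fin p → ℕ) = Pi.single i a + Pi.single i b := by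
  funext j; by_cases h : j = i
  · subst h; simp [Pi.single_eq_same]
  · simp [Pi.single_eq_of_ne h]

lemma my_smul_single (i : Fin p) (k : ℕ) :
    k • (Pi.single i 1 : Fin p → ℕ) = Pi.single i k := by
  funext j; by_cases h : j = i
  · subst h; simp [Pi.single_eq_same]
  · simp [Pi.single_eq_of_ne h]

lemma my_single_ne_zero {i : Fin p} {k : ℕ} (h : k ≠ 0) :
    (Pi.single i k : Fin p → ℕ) ≠ 0 := by
  intro he
  have := congrFun he i
  simp [Pi.single_eq_same] at this
  exact h this

lemma my_decomp {i : Fin p} {k : ℕ} {a b : Fin p → ℕ} (h : a + b = Pi.single i k) :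
    a = Pi.single i (a i) ∧ b = Pi.single i (b i) ∧ a i + b i = k := by
  have hj : ∀ j, j ≠ i → a j = 0 ∧ b j = 0 := by
    intro j hji
    have := congrFun h j
    simp [Pi.single_eq_of_ne hji, Pi.add_apply] at this
    omega
  refine ⟨?_, ?_, ?_⟩
  · funext j; by_cases hji : j = i
    · replace hji := hji.symm; subst hji; simp [Pi.single_eq_same]
    · simp [(hj j hji).1, Pi.single_eq_of_ne hji]
  · funext j; by_cases hji : j = i
    · replace hji := hji.symm; subst hji; simp [Pi.single_eq_same]
    · simp [(hj j hji).2, Pi.single_eq_of_ne hji]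
  · have := congrFun h i
    simpa [Pi.single_eq_same, Pi.add_apply] using this

lemma minGen_single_iff {S : Set (Fin p → ℕ)} (i : Fin p) (k : ℕ) :
    IsMinGen S (Pi.single i k) ↔ NatMinGen {a | (Pi.single i a : Fin p → ℕ) ∈ S} k := by
  constructor
  · rintro ⟨h1, h2, h3⟩
    refine ⟨h1, ?_, ?_⟩
    · rintro rfl
      exact h2 (Pi.single_zero i)
    · intro a ha b hb ha0 hb0 habk
      exact h3 _ ha _ hb (my_single_ne_zero ha0) (my_single_ne_zero hb0)
        (by rw [← my_single_add, habk])
  · rintro ⟨h1, h2, h3⟩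
    refine ⟨h1, my_single_ne_zero h2, ?_⟩
    intro a ha b hb ha0 hb0 hab
    obtain ⟨ea, eb, hk⟩ := my_decomp hab
    have hai : a i ≠ 0 := by
      intro h0; rw [h0, Pi.single_zero] at ea; exact ha0 ea
    have hbi : b i ≠ 0 := by
      intro h0; rw [h0, Pi.single_zero] at eb; exact hb0 eb
    refine h3 (a i) ?_ (b i) ?_ hai hbi hk
    · show (Pi.single i (a i) : Fin p → ℕ) ∈ S; rw [← ea]; exact ha
    · show (Pi.single i (b i) : Fin p → ℕ) ∈ S; rw [← eb]; exact hb

lemma cof_line {S : Set (Fin p → ℕ)} (hfin : {x : Fin p → ℕ | x ∉ S}.Finite)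
    (f : ℕ → (Fin p → ℕ)) (hf : Function.Injective f) :
    ∃ N, ∀ n, N ≤ n → f n ∈ S := by
  have h2 : {n : ℕ | f n ∉ S}.Finite := Set.Finite.preimage hf.injOn hfin
  obtain ⟨N, hN⟩ := h2.bddAbove
  refine ⟨N + 1, fun n hn => ?_⟩
  by_contra hc
  have : n ≤ N := hN hc
  omega

lemma univ_of_units {S : Set (Fin p → ℕ)} (hS : IsSubmonoidSet S)
    (h : ∀ i : Fin p, (Pi.single i 1 : Fin p → ℕ) ∈ S) : S = Set.univ := by
  ext x
  simp only [Set.mem_univ, iff_true]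
  suffices H : ∀ n (x : Fin p → ℕ), Finset.univ.sum x = n → x ∈ S by
    exact H _ x rfl
  intro n
  induction n using Nat.strong_induction_on with
  | _ n ih =>
    intro x hx
    by_cases hx0 : x = 0
    · exact hx0 ▸ hS.1
    · have hex : ∃ i, x i ≠ 0 := by
        by_contra hc
        push_neg at hc
        exact hx0 (funext fun i => hc i)
      obtain ⟨i, hi⟩ := hex
      set y : Fin p → ℕ := x - Pi.single i 1 with hy
      have hxy : Pi.single i 1 + y = x := by
        funext j
        by_cases hji : j = i
        · replace hji := hji.symm; subst hji
          simp only [hy, Pi.add_apply, Pi.sub_apply, Pi.single_eq_same]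
          omega
        · simp only [hy, Pi.add_apply, Pi.sub_apply, Pi.single_eq_of_ne hji]
          omega
      have hsum : Finset.univ.sum x = 1 + Finset.univ.sum y := by
        rw [← hxy]
        simp [Pi.add_apply, Finset.sum_add_distrib, Finset.sum_pi_single']
      have hy_mem : y ∈ S := by
        refine ih (Finset.univ.sum y) ?_ y rfl
        omega
      exact hxy ▸ hS.2 _ (h i) _ hy_mem

end Bridge

theorem stmt5 {p : ℕ} (hp : 2 ≤ p) (S : Set (Fin p → ℕ))
    (hS : IsSubmonoidSet S)
    (hfin : {x : Fin p → ℕ | x ∉ S}.Finite)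
    (hne : S ≠ Set.univ)
    (hdim : (minGens S).ncard = 2 * p) :
    ∃ (i : Fin p) (l1 l2 : ℕ) (q : Fin p → ℕ),
      Nat.gcd l1 l2 = 1 ∧
      minGens S =
        ({x | ∃ j : Fin p, j ≠ i ∧ x = Pi.single j 1}
            ∪ {l1 • Pi.single i 1, l2 • Pi.single i 1})
          ∪ {x | ∃ j : Fin p, j ≠ i ∧ x = Pi.single i 1 + q j • Pi.single j 1} := by
  classical
  -- pick an axis i with e_i ∉ S
  have hex_i : ∃ i : Fin p, (Pi.single i 1 : Fin p → ℕ) ∉ S := by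
    by_contra hc; push_neg at hc; exact hne (univ_of_units hS hc)
  obtain ⟨i, hi⟩ := hex_i
  -- generic injectivity of axis lines
  have hinj : ∀ j : Fin p, Function.Injective (fun k : ℕ => (Pi.single j k : Fin p → ℕ)) := by
    intro j a b hab
    have := congrFun hab j
    simpa [Pi.single_eq_same] using this
  have hcof : ∀ j : Fin p, ∃ N, ∀ n, N ≤ n → n ∈ {a : ℕ | (Pi.single j a : Fin p → ℕ) ∈ S} :=
    fun j => cof_line hfin _ (hinj j)
  -- two generators on axis i
  obtain ⟨m, u, hmu, hm, hu⟩ := natMinGen_two {a : ℕ | (Pi.single i a : Fin p → ℕ) ∈ S} hi (hcof i)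
  have hm0 : m ≠ 0 := hm.2.1
  have hu0 : u ≠ 0 := hu.2.1
  -- existence of t with e_i + t e_j ∈ S
  have hq : ∀ j : Fin p, j ≠ i → ∃ t, (Pi.single i 1 + Pi.single j t : Fin p → ℕ) ∈ S := by
    intro j hj
    have hinjt : Function.Injective (fun t : ℕ => (Pi.single i 1 + Pi.single j t : Fin p → ℕ)) := by
      intro a b hab
      have := congrFun hab j
      simpa [Pi.add_apply, Pi.single_eq_same, Pi.single_eq_of_ne hj] using this
    obtain ⟨N, hN⟩ := cof_line hfin _ hinjt
    exact ⟨N, hN N le_rfl⟩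
  set q : Fin p → ℕ := fun j => if h : j ≠ i then Nat.find (hq j h) else 0 with hqdef
  have hq_eq : ∀ j (hj : j ≠ i), q j = Nat.find (hq j hj) := by
    intro j hj; simp only [hqdef, dif_pos hj]
  have hqmem : ∀ j, j ≠ i → (Pi.single i 1 + Pi.single j (q j) : Fin p → ℕ) ∈ S := by
    intro j hj; rw [hq_eq j hj]; exact Nat.find_spec (hq j hj)
  have hqmin : ∀ j (hj : j ≠ i), ∀ t, t < q j → (Pi.single i 1 + Pi.single j t : Fin p → ℕ) ∉ S := by
    intro j hj t ht; rw [hq_eq j hj] at ht; exact Nat.find_min (hq j hj) ht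
  have hq0 : ∀ j, j ≠ i → q j ≠ 0 := by
    intro j hj h0
    have hmem := hqmem j hj
    rw [h0, Pi.single_zero, add_zero] at hmem
    exact hi hmem
  -- e_i + q_j e_j is a minimal generator
  have hqgen : ∀ j, j ≠ i → IsMinGen S (Pi.single i 1 + Pi.single j (q j)) := by
    intro j hj
    have key : ∀ a ∈ S, ∀ b ∈ S, a ≠ 0 → a i = 0 →
        a + b = Pi.single i 1 + Pi.single j (q j) → False := by
      intro a ha b hb ha0 hai heq
      have hco : ∀ k, a k + b k
          = (Pi.single i 1 : Fin p → ℕ) k + (Pi.single j (q j) : Fin p → ℕ) k := by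
        intro k; exact congrFun heq k
      have hbi : b i = 1 := by
        have := hco i
        simp [Pi.single_eq_same, Pi.single_eq_of_ne (Ne.symm hj)] at this
        omega
      have hzero : ∀ k, k ≠ i → k ≠ j → a k = 0 ∧ b k = 0 := by
        intro k hki hkj
        have := hco k
        simp [Pi.single_eq_of_ne hki, Pi.single_eq_of_ne hkj] at this
        omega
      have haeq : a = Pi.single j (a j) := by
        funext k
        by_cases hkj : k = j
        · subst hkj; simp [Pi.single_eq_same]
        · by_cases hki : k = i
          · replace hki := hki.symm; subst hki; simp [Pi.single_eq_of_ne (Ne.symm hj), hai]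
          · simp [(hzero k hki hkj).1, Pi.single_eq_of_ne hkj]
      have haj : a j ≠ 0 := by
        intro h0; rw [h0, Pi.single_zero] at haeq; exact ha0 haeq
      have hbj : a j + b j = q j := by
        have := hco j
        simpa [Pi.single_eq_same, Pi.single_eq_of_ne hj, Pi.add_apply] using this
      have hbeq : b = Pi.single i 1 + Pi.single j (b j) := by
        funext k
        by_cases hkj : k = j
        · subst hkj; simp [Pi.single_eq_same, Pi.single_eq_of_ne hj]
        · by_cases hki : k = i
          · replace hki := hki.symm; subst hki
            simp [Pi.single_eq_same, Pi.single_eq_of_ne (Ne.symm hj), hbi]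
          · simp [(hzero k hki hkj).2, Pi.single_eq_of_ne hkj, Pi.single_eq_of_ne hki]
      have hblt : b j < q j := by omega
      exact hqmin j hj (b j) hblt (hbeq ▸ hb)
    refine ⟨hqmem j hj, ?_, ?_⟩
    · intro h0
      have := congrFun h0 i
      simp [Pi.add_apply, Pi.single_eq_same, Pi.single_eq_of_ne (Ne.symm hj)] at this
    · intro a ha b hb ha0 hb0 heq
      have h1 : a i + b i = 1 := by
        have := congrFun heq i
        simpa [Pi.add_apply, Pi.single_eq_same, Pi.single_eq_of_ne (Ne.symm hj)] using this
      rcases Nat.eq_zero_or_pos (a i) with hai | hai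
      · exact (key a ha b hb ha0 hai heq).elim
      · have hbi : b i = 0 := by omega
        exact (key b hb a ha hb0 hbi (by rwa [add_comm] at heq)).elim
  -- a minimal generator on each axis
  have hgex : ∀ j : Fin p, ∃ c, NatMinGen {a : ℕ | (Pi.single j a : Fin p → ℕ) ∈ S} c := by
    intro j
    apply natMinGen_exists
    obtain ⟨N, hN⟩ := hcof j
    exact ⟨N + 1, Nat.succ_ne_zero N, hN _ (Nat.le_succ N)⟩
  choose g hgspec using hgex
  have hg0 : ∀ j, g j ≠ 0 := fun j => (hgspec j).2.1
  -- the 2p map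
  set F : Fin p × Bool → (Fin p → ℕ) := fun jb =>
    if jb.2 = true then
      (if jb.1 = i then Pi.single i u else Pi.single i 1 + Pi.single jb.1 (q jb.1))
    else
      (if jb.1 = i then Pi.single i m else Pi.single jb.1 (g jb.1)) with hF
  have hFff : ∀ j : Fin p, j ≠ i → F (j, false) = Pi.single j (g j) := by
    intro j hj; simp [hF, hj]
  have hFfi : F (i, false) = Pi.single i m := by
    simp [hF]
  have hFtf : ∀ j : Fin p, j ≠ i → F (j, true) = Pi.single i 1 + Pi.single j (q j) := by
    intro j hj; simp [hF, hj]
  have hFti : F (i, true) = Pi.single i u := by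
    simp [hF]
  -- range F consists of minimal generators
  have hFsub : Set.range F ⊆ minGens S := by
    rintro x ⟨⟨j, b⟩, rfl⟩
    cases b with
    | false =>
      by_cases hji : j = i
      · replace hji := hji.symm; subst hji; rw [hFfi]; exact (minGen_single_iff i m).mpr hm
      · rw [hFff j hji]; exact (minGen_single_iff j (g j)).mpr (hgspec j)
    | true =>
      by_cases hji : j = i
      · replace hji := hji.symm; subst hji; rw [hFti]; exact (minGen_single_iff i u).mpr hu
      · rw [hFtf j hji]; exact hqgen j hji
  -- F is injective
  have hFinj : Function.Injective F := by
    rintro ⟨j, b⟩ ⟨j', b'⟩ h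
    cases b with
    | false =>
      cases b' with
      | false =>
        by_cases hji : j = i
        · by_cases hji' : j' = i
          · replace hji := hji.symm; subst hji; replace hji' := hji'.symm; subst hji'; rfl
          · exfalso
            replace hji := hji.symm; subst hji
            rw [hFfi, hFff j' hji'] at h
            have := congrFun h i
            simp [Pi.single_eq_same, Pi.single_eq_of_ne (Ne.symm hji')] at this
            exact hm0 this
        · by_cases hji' : j' = i
          · exfalso
            replace hji' := hji'.symm; subst hji'
            rw [hFfi, hFff j hji] at h
            have := congrFun h i
            simp [Pi.single_eq_same, Pi.single_eq_of_ne (Ne.symm hji)] at this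
            exact hm0 this.symm
          · rw [hFff j hji, hFff j' hji'] at h
            by_cases hjj' : j = j'
            · subst hjj'; rfl
            · exfalso
              have := congrFun h j
              simp [Pi.single_eq_same, Pi.single_eq_of_ne (hjj' : j ≠ j')] at this
              exact hg0 j this
      | true =>
        exfalso
        by_cases hji : j = i
        · by_cases hji' : j' = i
          · replace hji := hji.symm; subst hji; replace hji' := hji'.symm; subst hji'
            rw [hFfi, hFti] at h
            have := congrFun h i
            simp [Pi.single_eq_same] at this
            exact hmu this
          · replace hji := hji.symm; subst hji
            rw [hFfi, hFtf j' hji'] at h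
            have := congrFun h j'
            simp [Pi.single_eq_same, Pi.single_eq_of_ne hji',
              Pi.single_eq_of_ne (Ne.symm hji')] at this
            exact hq0 j' hji' this.symm
        · by_cases hji' : j' = i
          · replace hji' := hji'.symm; subst hji'
            rw [hFff j hji, hFti] at h
            have := congrFun h i
            simp [Pi.single_eq_same, Pi.single_eq_of_ne (Ne.symm hji)] at this
            exact hu0 this.symm
          · rw [hFff j hji, hFtf j' hji'] at h
            have := congrFun h i
            simp [Pi.single_eq_same, Pi.single_eq_of_ne (Ne.symm hji),
              Pi.single_eq_of_ne (Ne.symm hji')] at this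
    | true =>
      cases b' with
      | false =>
        exfalso
        by_cases hji : j = i
        · by_cases hji' : j' = i
          · replace hji := hji.symm; subst hji; replace hji' := hji'.symm; subst hji'
            rw [hFti, hFfi] at h
            have := congrFun h i
            simp [Pi.single_eq_same] at this
            exact hmu this.symm
          · replace hji := hji.symm; subst hji
            rw [hFti, hFff j' hji'] at h
            have := congrFun h i
            simp [Pi.single_eq_same, Pi.single_eq_of_ne (Ne.symm hji')] at this
            exact hu0 this
        · by_cases hji' : j' = i
          · replace hji' := hji'.symm; subst hji'
            rw [hFtf j hji, hFfi] at h
            have := congrFun h j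
            simp [Pi.single_eq_same, Pi.single_eq_of_ne hji,
              Pi.single_eq_of_ne (Ne.symm hji)] at this
            exact hq0 j hji this
          · rw [hFtf j hji, hFff j' hji'] at h
            have := congrFun h i
            simp [Pi.single_eq_same, Pi.single_eq_of_ne (Ne.symm hji),
              Pi.single_eq_of_ne (Ne.symm hji')] at this
      | true =>
        by_cases hji : j = i
        · by_cases hji' : j' = i
          · replace hji := hji.symm; subst hji; replace hji' := hji'.symm; subst hji'; rfl
          · exfalso
            replace hji := hji.symm; subst hji
            rw [hFti, hFtf j' hji'] at h
            have := congrFun h j'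
            simp [Pi.single_eq_same, Pi.single_eq_of_ne hji',
              Pi.single_eq_of_ne (Ne.symm hji')] at this
            exact hq0 j' hji' this.symm
        · by_cases hji' : j' = i
          · exfalso
            replace hji' := hji'.symm; subst hji'
            rw [hFtf j hji, hFti] at h
            have := congrFun h j
            simp [Pi.single_eq_same, Pi.single_eq_of_ne hji,
              Pi.single_eq_of_ne (Ne.symm hji)] at this
            exact hq0 j hji this
          · rw [hFtf j hji, hFtf j' hji'] at h
            by_cases hjj' : j = j'
            · subst hjj'; rfl
            · exfalso
              have := congrFun h j
              simp [Pi.single_eq_same, Pi.single_eq_of_ne hji,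
                Pi.single_eq_of_ne (Ne.symm hji), Pi.single_eq_of_ne (hjj' : j ≠ j')] at this
              exact hq0 j hji this
  -- cardinality of the range
  have hcard : (Set.range F).ncard = 2 * p := by
    have h1 : Nat.card (Set.range F) = Nat.card (Fin p × Bool) :=
      Nat.card_range_of_injective hFinj
    rw [← Nat.card_coe_set_eq, h1, Nat.card_eq_fintype_card]
    simp only [Fintype.card_prod, Fintype.card_fin, Fintype.card_bool]
    omega
  have hfinA : (minGens S).Finite := by
    by_contra hc
    have h0 : (minGens S).ncard = 0 := Set.Infinite.ncard hc
    omega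
  have hEq : Set.range F = minGens S :=
    Set.eq_of_subset_of_ncard_le hFsub (by rw [hdim, hcard]) hfinA
  -- any axis-j minimal generator equals g j, for j ≠ i
  have haxis : ∀ j : Fin p, j ≠ i → ∀ c : ℕ,
      (Pi.single j c : Fin p → ℕ) ∈ minGens S → c = g j := by
    intro j hj c hc
    rw [← hEq] at hc
    obtain ⟨⟨k, b⟩, hk⟩ := hc
    cases b with
    | true =>
      exfalso
      by_cases hki : k = i
      · replace hki := hki.symm; subst hki; rw [hFti] at hk
        have := congrFun hk i
        simp [Pi.single_eq_same, Pi.single_eq_of_ne (Ne.symm hj)] at this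
        exact hu0 this
      · rw [hFtf k hki] at hk
        have := congrFun hk i
        simp [Pi.single_eq_same, Pi.single_eq_of_ne (Ne.symm hj),
          Pi.single_eq_of_ne (Ne.symm hki)] at this
    | false =>
      by_cases hki : k = i
      · exfalso; replace hki := hki.symm; subst hki; rw [hFfi] at hk
        have := congrFun hk i
        simp [Pi.single_eq_same, Pi.single_eq_of_ne (Ne.symm hj)] at this
        exact hm0 this
      · rw [hFff k hki] at hk
        have hkj : k = j := by
          by_contra hkj
          have := congrFun hk k
          simp [Pi.single_eq_same, Pi.single_eq_of_ne (hkj : k ≠ j)] at this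
          exact hg0 k this
        subst hkj
        have := congrFun hk k
        simpa [Pi.single_eq_same] using this.symm
  -- e_j ∈ S for j ≠ i
  have h1mem : ∀ j : Fin p, j ≠ i → (Pi.single j 1 : Fin p → ℕ) ∈ S := by
    intro j hj
    by_contra h1
    obtain ⟨m', u', hmu', hm', hu'⟩ :=
      natMinGen_two {a : ℕ | (Pi.single j a : Fin p → ℕ) ∈ S} h1 (hcof j)
    have e1 : m' = g j := haxis j hj m' ((minGen_single_iff j m').mpr hm')
    have e2 : u' = g j := haxis j hj u' ((minGen_single_iff j u').mpr hu')
    exact hmu' (e1.trans e2.symm)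
  have hg1 : ∀ j : Fin p, j ≠ i → g j = 1 := by
    intro j hj
    have hall : ∀ k : ℕ, (Pi.single j k : Fin p → ℕ) ∈ S := by
      intro k
      induction k with
      | zero => rw [Pi.single_zero]; exact hS.1
      | succ n ihn =>
        rw [my_single_add j n 1]
        exact hS.2 _ ihn _ (h1mem j hj)
    by_contra hne1
    have hgj := hgspec j
    have h2 : 2 ≤ g j := by have := hg0 j; omega
    exact hgj.2.2 1 (h1mem j hj) (g j - 1) (hall _) one_ne_zero (by omega) (by omega)
  -- axis-i minimal generators are exactly m and u
  have haxisi : ∀ c, NatMinGen {a : ℕ | (Pi.single i a : Fin p → ℕ) ∈ S} c →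
      c = m ∨ c = u := by
    intro c hc
    have hmem : Pi.single i c ∈ minGens S := (minGen_single_iff i c).mpr hc
    rw [← hEq] at hmem
    obtain ⟨⟨k, b⟩, hk⟩ := hmem
    by_cases hki : k = i
    · replace hki := hki.symm; subst hki
      cases b with
      | false =>
        left
        rw [hFfi] at hk
        have := congrFun hk i
        simpa [Pi.single_eq_same] using this.symm
      | true =>
        right
        rw [hFti] at hk
        have := congrFun hk i
        simpa [Pi.single_eq_same] using this.symm
    · exfalso
      cases b with
      | false =>
        rw [hFff k hki] at hk
        have := congrFun hk k
        simp [Pi.single_eq_same, Pi.single_eq_of_ne (hki : k ≠ i)] at this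
        exact hg0 k this
      | true =>
        rw [hFtf k hki] at hk
        have := congrFun hk k
        simp [Pi.single_eq_same, Pi.single_eq_of_ne (hki : k ≠ i),
          Pi.single_eq_of_ne (Ne.symm hki)] at this
        exact hq0 k hki this
  have hgcd : Nat.gcd m u = 1 := gcd_eq_one_of_sparse _ m u haxisi (hcof i)
  -- conclusion
  refine ⟨i, m, u, q, hgcd, ?_⟩
  rw [← hEq]
  ext x
  simp only [Set.mem_union, Set.mem_insert_iff, Set.mem_singleton_iff, Set.mem_setOf_eq]
  constructor
  · rintro ⟨⟨j, b⟩, rfl⟩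
    cases b with
    | false =>
      by_cases hji : j = i
      · replace hji := hji.symm; subst hji
        exact Or.inl (Or.inr (Or.inl (by rw [hFfi, my_smul_single])))
      · exact Or.inl (Or.inl ⟨j, hji, by rw [hFff j hji, hg1 j hji]⟩)
    | true =>
      by_cases hji : j = i
      · replace hji := hji.symm; subst hji
        exact Or.inl (Or.inr (Or.inr (by rw [hFti, my_smul_single])))
      · exact Or.inr ⟨j, hji, by rw [hFtf j hji, my_smul_single]⟩
  · rintro ((⟨j, hj, rfl⟩ | rfl | rfl) | ⟨j, hj, rfl⟩)
    · exact ⟨(j, false), by rw [hFff j hj, hg1 j hj]⟩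
    · exact ⟨(i, false), by rw [hFfi, my_smul_single]⟩
    · exact ⟨(i, true), by rw [hFti, my_smul_single]⟩
    · exact ⟨(j, true), by rw [hFtf j hj, my_smul_single]⟩
end

section
/- Let p be a positive integer. If S is an ℕ^p-semigroup with S ≠ {0} and S ≠ ℕ^p, then the embedding dimension of S satisfies e(S) ≥ 2p. -/
/-! Write `eᵢ = Pi.single i 1`. For every coordinate `i` we exhibit two minimal generators in
`minGensAt S i`, and these sets are pairwise disjoint. If `eᵢ ∉ S`, the axis `S ∩ ℕ eᵢ` is a
proper numerical semigroup, and its least element `m eᵢ` and its least element `n eᵢ` with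
`m ∤ n` are atoms of `S`. If `eᵢ ∈ S`, then `eᵢ` is one generator; the other is a minimal `y ∈ S`
with `yᵢ ≠ 0`, `y - eᵢ ∉ S` and `y_k = 0` whenever `k ≠ i` and `e_k ∈ S`. Such a `y` exists: a
minimal gap vanishes at every `k` with `e_k ∈ S`, and for a maximal gap `g` among those vanishing
at these `k ≠ i` we may take `y = g + eᵢ`.
Each generator is found as a `≤`-minimal element of a property that passes from a sum to one of
its summands. Since the gaps are bounded, so are the minimal generators, and cardinalities add
up. -/

open scoped Function

lemma Set.mul_le_ncard_of_pairwise_disjoint {ι α : Type*} [Fintype ι] {T : Set α}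
    (hT : T.Finite) {s : ι → Set α} (hsT : ∀ i, s i ⊆ T) (hs : Pairwise (Disjoint on s))
    {n : ℕ} (hn : ∀ i, n ≤ (s i).ncard) : Fintype.card ι * n ≤ T.ncard :=
  calc Fintype.card ι * n = ∑ _ : ι, n := by simp
    _ ≤ ∑ i, (s i).ncard := Finset.sum_le_sum fun i _ => hn i
    _ = (⋃ i, s i).ncard := by
      rw [Set.ncard_iUnion_of_finite (fun i => hT.subset (hsT i)) hs, finsum_eq_sum_of_fintype]
    _ ≤ T.ncard := Set.ncard_le_ncard (Set.iUnion_subset hsT) hT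

section

variable {p : ℕ} {S : Set (Fin p → ℕ)} {i : Fin p}

lemma single_le_iff {n : ℕ} {x : Fin p → ℕ} : Pi.single i n ≤ x ↔ n ≤ x i := by
  refine ⟨fun h => by simpa using h i, fun h k => ?_⟩
  rcases eq_or_ne k i with rfl | hk
  · simpa using h
  · simp [hk]

lemma eq_single_of_forall_ne {y : Fin p → ℕ} (hy : ∀ k ≠ i, y k = 0) :
    y = Pi.single i (y i) := by
  ext k
  rcases eq_or_ne k i with rfl | hk <;> simp [*]

lemma eq_zero_or_eq_single_one_of_le {y : Fin p → ℕ} (h : y ≤ Pi.single i 1) :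
    y = 0 ∨ y = Pi.single i 1 := by
  have hy : y = Pi.single i (y i) :=
    eq_single_of_forall_ne fun k hk => by simpa [Pi.single_eq_of_ne hk] using h k
  rw [hy]
  rcases Nat.le_one_iff_eq_zero_or_eq_one.mp (by simpa using h i) with h | h <;> simp [h]

lemma isMinGen_of_minimal {P : (Fin p → ℕ) → Prop} (hPS : ∀ x, P x → x ∈ S ∧ x ≠ 0)
    (hP : ∀ a ∈ S, ∀ b ∈ S, a ≠ 0 → b ≠ 0 → P (a + b) → P a ∨ P b) {x : Fin p → ℕ}
    (hx : Minimal P x) : IsMinGen S x := by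
  refine ⟨(hPS x hx.1).1, (hPS x hx.1).2, ?_⟩
  rintro a ha b hb ha0 hb0 rfl
  rcases hP a ha b hb ha0 hb0 hx.1 with h | h
  · exact hb0 (le_antisymm (by simpa using hx.2 h le_self_add) bot_le)
  · exact ha0 (le_antisymm (by simpa using hx.2 h le_add_self) bot_le)

lemma exists_forall_mem_of_lt_apply (hfin : {x : Fin p → ℕ | x ∉ S}.Finite) :
    ∃ B : Fin p → ℕ, ∀ y i, B i < y i → y ∈ S := by
  obtain ⟨B, hB⟩ := hfin.bddAbove
  exact ⟨B, fun y i hi => by_contra fun hy => (hB hy i).not_gt hi⟩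

lemma finite_minGens (hfin : {x : Fin p → ℕ | x ∉ S}.Finite) : (minGens S).Finite := by
  obtain ⟨B, hB⟩ := exists_forall_mem_of_lt_apply hfin
  refine (Set.finite_Iic fun i => 2 * B i + 1).subset fun x hx i => ?_
  change x i ≤ 2 * B i + 1
  -- otherwise `x = (Bᵢ + 1) eᵢ + (x - (Bᵢ + 1) eᵢ)` with both summands beyond every gap
  by_contra! hxi
  have hle : Pi.single i (B i + 1) ≤ x := single_le_iff.mpr (by omega)
  refine hx.2.2 _ (hB _ i (by simp)) (x - Pi.single i (B i + 1)) (hB _ i (by simp; omega))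
    (by simp) (fun h => ?_) (add_tsub_cancel_of_le hle)
  have := congrFun h i
  simp at this
  omega

lemma exists_gap_apply_eq_zero_of_single_mem (hS : IsSubmonoidSet S) (huniv : S ≠ Set.univ) :
    ∃ g ∉ S, ∀ k, Pi.single k 1 ∈ S → g k = 0 := by
  obtain ⟨h, hh⟩ := (Set.ne_univ_iff_exists_notMem S).mp huniv
  obtain ⟨g, -, hg⟩ := exists_minimal_le_of_wellFoundedLT (· ∉ S) h hh
  refine ⟨g, hg.1, fun k hk => by_contra fun hgk => ?_⟩
  have hle : Pi.single k 1 ≤ g := single_le_iff.mpr (Nat.one_le_iff_ne_zero.mpr hgk)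
  have hsub : g - Pi.single k 1 ∉ S := fun h => hg.1 (tsub_add_cancel_of_le hle ▸ hS.2 _ h _ hk)
  have := hg.2 hsub tsub_le_self k
  simp at this
  omega

def minGensAt (S : Set (Fin p → ℕ)) (i : Fin p) : Set (Fin p → ℕ) :=
  {g ∈ minGens S | g i ≠ 0 ∧ ∀ k ≠ i, g k ≠ 0 → Pi.single k 1 ∉ S ∧ Pi.single i 1 ∈ S}

lemma minGensAt_subset (i : Fin p) : minGensAt S i ⊆ minGens S := Set.sep_subset _ _

lemma pairwise_disjoint_minGensAt : Pairwise (Disjoint on minGensAt S) := by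
  intro i j hij
  refine Set.disjoint_left.mpr fun g hgi hgj => ?_
  exact (hgi.2.2 j hij.symm hgj.2.1).1 (hgj.2.2 i hij hgi.2.1).2

lemma mem_minGensAt_of_forall_ne {g : Fin p → ℕ} (hg : IsMinGen S g) (hgi : g i ≠ 0)
    (hg0 : ∀ k ≠ i, g k = 0) : g ∈ minGensAt S i :=
  ⟨hg, hgi, fun k hk hgk => absurd (hg0 k hk) hgk⟩

lemma mem_minGensAt_of_minimal {P : (Fin p → ℕ) → Prop}
    (hPS : ∀ y, P y → y ∈ S ∧ y ≠ 0 ∧ ∀ k ≠ i, y k = 0)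
    (hP : ∀ a ∈ S, ∀ b ∈ S, a ≠ 0 → b ≠ 0 → P (a + b) → P a ∨ P b) {x : Fin p → ℕ}
    (hx : Minimal P x) : x ∈ minGensAt S i := by
  obtain ⟨-, hx0, hxk⟩ := hPS x hx.1
  have hxmin : IsMinGen S x :=
    isMinGen_of_minimal (fun y hy => ⟨(hPS y hy).1, (hPS y hy).2.1⟩) hP hx
  refine mem_minGensAt_of_forall_ne hxmin (fun h => hx0 ?_) hxk
  rw [eq_single_of_forall_ne hxk, h, Pi.single_zero]

lemma exists_ne_mem_minGensAt_of_single_notMem (hfin : {x : Fin p → ℕ | x ∉ S}.Finite)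
    (hi : Pi.single i 1 ∉ S) : ∃ a ∈ minGensAt S i, ∃ b ∈ minGensAt S i, a ≠ b := by
  obtain ⟨B, hB⟩ := exists_forall_mem_of_lt_apply hfin
  let OnAxis : (Fin p → ℕ) → Prop := fun y => y ∈ S ∧ y ≠ 0 ∧ ∀ k ≠ i, y k = 0
  have onAxis_single {n : ℕ} (hn : B i < n) : OnAxis (Pi.single i n) :=
    ⟨hB _ i (by simpa using hn), by simp; omega, fun k hk => by simp [hk]⟩
  have onAxis_left {a b : Fin p → ℕ} (ha : a ∈ S) (ha0 : a ≠ 0) (h : OnAxis (a + b)) :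
      OnAxis a :=
    ⟨ha, ha0, fun k hk => (Nat.add_eq_zero_iff.mp (h.2.2 k hk)).1⟩
  obtain ⟨x, -, hx⟩ := exists_minimal_le_of_wellFoundedLT OnAxis _ (onAxis_single (lt_add_one _))
  set m := x i
  have hm : 2 ≤ m := by
    have hxm : x = Pi.single i m := eq_single_of_forall_ne hx.1.2.2
    have : m ≠ 0 := fun h => hx.1.2.1 (by rw [hxm, h, Pi.single_zero])
    have : m ≠ 1 := fun h => hi (h ▸ hxm ▸ hx.1.1)
    omega
  let P : (Fin p → ℕ) → Prop := fun y => OnAxis y ∧ ¬ m ∣ y i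
  have hPn : P (Pi.single i (m * (B i + 1) + 1)) := by
    refine ⟨onAxis_single (by nlinarith), fun h => ?_⟩
    have := Nat.le_of_dvd one_pos ((Nat.dvd_add_right (dvd_mul_right m _)).mp (by simpa using h))
    omega
  obtain ⟨y, -, hy⟩ := exists_minimal_le_of_wellFoundedLT P _ hPn
  refine ⟨x, mem_minGensAt_of_minimal (fun _ => id) ?_ hx,
    y, mem_minGensAt_of_minimal (fun _ h => h.1) ?_ hy, fun h => hy.1.2 (h ▸ dvd_refl m)⟩
  · exact fun a ha b _ ha0 _ h => Or.inl (onAxis_left ha ha0 h)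
  · intro a ha b hb ha0 hb0 h
    by_cases hma : m ∣ a i
    · refine Or.inr ⟨onAxis_left hb hb0 (add_comm a b ▸ h.1), fun hmb => h.2 ?_⟩
      simpa using dvd_add hma hmb
    · exact Or.inl ⟨onAxis_left ha ha0 h.1, hma⟩

lemma single_mem_minGensAt (hi : Pi.single i 1 ∈ S) : Pi.single i 1 ∈ minGensAt S i := by
  have hmin : Minimal (fun y => y ∈ S ∧ y ≠ 0) (Pi.single i 1) :=
    ⟨⟨hi, by simp⟩, fun y hy hle => ((eq_zero_or_eq_single_one_of_le hle).resolve_left hy.2).ge⟩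
  refine mem_minGensAt_of_forall_ne (isMinGen_of_minimal (fun _ => id) ?_ hmin) (by simp)
    fun k hk => by simp [hk]
  exact fun a ha _ _ ha0 _ _ => Or.inl ⟨ha, ha0⟩

lemma exists_mem_sub_single_notMem (hS : IsSubmonoidSet S)
    (hfin : {x : Fin p → ℕ | x ∉ S}.Finite) (huniv : S ≠ Set.univ) (i : Fin p) :
    ∃ y ∈ S, y - Pi.single i 1 ∉ S ∧ y i ≠ 0 ∧ ∀ k ≠ i, Pi.single k 1 ∈ S → y k = 0 := by
  obtain ⟨g₀, hg₀, hg₀0⟩ := exists_gap_apply_eq_zero_of_single_mem hS huniv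
  let G : Set (Fin p → ℕ) := {g | g ∉ S ∧ ∀ k ≠ i, Pi.single k 1 ∈ S → g k = 0}
  obtain ⟨g, hg⟩ := (hfin.subset fun _ h => h.1 : G.Finite).exists_maximal
    ⟨g₀, hg₀, fun k _ hk => hg₀0 k hk⟩
  have hgk : ∀ k ≠ i, Pi.single k 1 ∈ S → (g + Pi.single i 1 : Fin p → ℕ) k = 0 :=
    fun k hk hkS => by simp [hk, hg.1.2 k hk hkS]
  refine ⟨g + Pi.single i 1, by_contra fun h => ?_, by simpa using hg.1.1, by simp, hgk⟩
  have := hg.2 ⟨h, hgk⟩ le_self_add i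
  simp at this

lemma exists_mem_minGensAt_ne_single (hS : IsSubmonoidSet S)
    (hfin : {x : Fin p → ℕ | x ∉ S}.Finite) (huniv : S ≠ Set.univ) (hi : Pi.single i 1 ∈ S) :
    ∃ z ∈ minGensAt S i, z ≠ Pi.single i 1 := by
  let P : (Fin p → ℕ) → Prop := fun y =>
    y ∈ S ∧ y - Pi.single i 1 ∉ S ∧ y i ≠ 0 ∧ ∀ k ≠ i, Pi.single k 1 ∈ S → y k = 0
  obtain ⟨y, hy⟩ := exists_mem_sub_single_notMem hS hfin huniv i
  obtain ⟨z, -, hz⟩ := exists_minimal_le_of_wellFoundedLT P y hy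
  have hP_left : ∀ a ∈ S, ∀ b ∈ S, P (a + b) → a i ≠ 0 → P a := by
    intro a ha b hb h hai
    refine ⟨ha, fun h' => h.2.1 ?_, hai, fun k hk hkS => ?_⟩
    · rw [← tsub_add_eq_add_tsub (single_le_iff.mpr (Nat.one_le_iff_ne_zero.mpr hai))]
      exact hS.2 _ h' _ hb
    · exact (Nat.add_eq_zero_iff.mp (h.2.2.2 k hk hkS)).1
  have hP : ∀ a ∈ S, ∀ b ∈ S, a ≠ 0 → b ≠ 0 → P (a + b) → P a ∨ P b := by
    intro a ha b hb _ _ h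
    by_cases hai : a i = 0
    · exact Or.inr (hP_left b hb a ha (add_comm a b ▸ h) fun hbi => h.2.2.1 (by simp [hai, hbi]))
    · exact Or.inl (hP_left a ha b hb h hai)
  have hzmin : IsMinGen S z :=
    isMinGen_of_minimal (fun x hx => ⟨hx.1, ne_of_apply_ne (· i) hx.2.2.1⟩) hP hz
  refine ⟨z, ⟨hzmin, hz.1.2.2.1, fun k hk hzk => ⟨fun hkS => hzk (hz.1.2.2.2 k hk hkS), hi⟩⟩,
    fun h => hz.1.2.1 ?_⟩
  simpa [h] using hS.1

lemma one_lt_ncard_minGensAt (hS : IsSubmonoidSet S) (hfin : {x : Fin p → ℕ | x ∉ S}.Finite)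
    (huniv : S ≠ Set.univ) (i : Fin p) : 1 < (minGensAt S i).ncard := by
  rw [Set.one_lt_ncard_iff ((finite_minGens hfin).subset (minGensAt_subset i))]
  by_cases hi : Pi.single i 1 ∈ S
  · obtain ⟨z, hz, hne⟩ := exists_mem_minGensAt_ne_single hS hfin huniv hi
    exact ⟨z, _, hz, single_mem_minGensAt hi, hne⟩
  · obtain ⟨a, ha, b, hb, hab⟩ := exists_ne_mem_minGensAt_of_single_notMem hfin hi
    exact ⟨a, b, ha, hb, hab⟩

end

theorem stmt7_general {p : ℕ} (S : Set (Fin p → ℕ))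
    (hS : IsSubmonoidSet S)
    (hfin : {x : Fin p → ℕ | x ∉ S}.Finite)
    (huniv : S ≠ Set.univ) :
    2 * p ≤ (minGens S).ncard := by
  simpa [mul_comm] using Set.mul_le_ncard_of_pairwise_disjoint (finite_minGens hfin)
    minGensAt_subset pairwise_disjoint_minGensAt (one_lt_ncard_minGensAt hS hfin huniv)

theorem stmt7 {p : ℕ} (hp : 1 ≤ p) (S : Set (Fin p → ℕ))
    (hS : IsSubmonoidSet S)
    (hfin : {x : Fin p → ℕ | x ∉ S}.Finite)
    (h0 : S ≠ {0})
    (huniv : S ≠ Set.univ) :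
    2 * p ≤ (minGens S).ncard :=
  stmt7_general S hS hfin huniv
end

section
/- Let p be a positive integer and let S be an ℕ^p-semigroup of genus 1, i.e., S = ℕ^p \ {v} for a single element v. Then v = e_i for some i ∈ {1, …, p}, and the minimal generating set of S is {e₁, …, e_{i−1}, e_{i+1}, …, e_p, 2e_i, 3e_i} ∪ {e_i + e_j : j ∈ {1, …, p}, j ≠ i}; in particular e(S) = 2p. -/
namespace Stmt8Aux

variable {p : ℕ}

/-- Sum of coordinates. -/
def sig (s : Fin p → ℕ) : ℕ := ∑ j, s j

lemma sig_add (a b : Fin p → ℕ) : sig (a + b) = sig a + sig b := by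
  simp [sig, Finset.sum_add_distrib]

lemma sig_eq_zero {s : Fin p → ℕ} : sig s = 0 ↔ s = 0 := by
  simp [sig, Finset.sum_eq_zero_iff, funext_iff]

lemma sig_single (j : Fin p) (n : ℕ) : sig (Pi.single j n) = n := by
  simp [sig]

lemma sig_eq_one {s : Fin p → ℕ} (h : sig s = 1) : ∃ j, s = Pi.single j 1 := by
  have h0 : s ≠ 0 := by
    intro h0
    rw [← sig_eq_zero] at h0
    omega
  obtain ⟨j, hj⟩ : ∃ j, s j ≠ 0 := by
    by_contra hc
    push_neg at hc
    exact h0 (funext hc)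
  have hsum : s j + ∑ k ∈ Finset.univ.erase j, s k = 1 := by
    rw [Finset.add_sum_erase _ _ (Finset.mem_univ j)]
    exact h
  refine ⟨j, funext fun k => ?_⟩
  by_cases hk : k = j
  · subst hk
    rw [Pi.single_eq_same]
    omega
  · have hz : ∑ k ∈ Finset.univ.erase j, s k = 0 := by omega
    rw [Finset.sum_eq_zero_iff] at hz
    rw [Pi.single_eq_of_ne hk]
    exact hz k (by simp [hk])

lemma single_ne {j i : Fin p} (h : j ≠ i) (m n : ℕ) (hm : m ≠ 0) :
    (Pi.single j m : Fin p → ℕ) ≠ Pi.single i n := by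
  intro hc
  have := congrFun hc j
  rw [Pi.single_eq_same, Pi.single_eq_of_ne h] at this
  exact hm this

lemma single_one_inj {j k : Fin p} (h : (Pi.single j 1 : Fin p → ℕ) = Pi.single k 1) : j = k := by
  by_contra hc
  exact single_ne hc 1 1 one_ne_zero h

lemma smul_single (n : ℕ) (i : Fin p) : n • (Pi.single i 1 : Fin p → ℕ) = Pi.single i n := by
  funext k
  by_cases hk : k = i
  · subst hk; simp
  · simp [Pi.single_eq_of_ne hk]

lemma eq_single_of_sig_one_ne {i : Fin p} {a : Fin p → ℕ} (ha : a ≠ Pi.single i 1)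
    (h1 : sig a = 1) : ∃ k, k ≠ i ∧ a = Pi.single k 1 := by
  obtain ⟨k, rfl⟩ := sig_eq_one h1
  exact ⟨k, fun h => ha (by rw [h]), rfl⟩

lemma minGens_single (i : Fin p) :
    minGens (Set.univ \ {Pi.single i 1} : Set (Fin p → ℕ)) =
      ({x | ∃ j : Fin p, j ≠ i ∧ x = Pi.single j 1}
          ∪ {Pi.single i 2, Pi.single i 3})
        ∪ {x | ∃ j : Fin p, j ≠ i ∧ x = Pi.single i 1 + Pi.single j 1} := by
  ext s
  simp only [minGens, IsMinGen, Set.mem_setOf_eq, Set.mem_diff, Set.mem_univ, true_and,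
    Set.mem_singleton_iff, Set.mem_union, Set.mem_insert_iff]
  constructor
  · rintro ⟨hse, hs0, hmin⟩
    have hs1 : sig s ≠ 0 := fun h => hs0 (sig_eq_zero.mp h)
    rcases eq_or_ne (sig s) 1 with h1 | h1
    · obtain ⟨j, rfl⟩ := sig_eq_one h1
      have hji : j ≠ i := fun h => hse (by rw [h])
      exact Or.inl (Or.inl ⟨j, hji, rfl⟩)
    · by_cases hsupp : ∃ j, j ≠ i ∧ s j ≠ 0
      · obtain ⟨j, hji, hsj⟩ := hsupp
        have hab : Pi.single j 1 + (s - Pi.single j 1) = s := by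
          funext k
          by_cases hk : k = j
          · subst hk
            simp only [Pi.add_apply, Pi.sub_apply, Pi.single_eq_same]
            omega
          · simp [Pi.single_eq_of_ne hk]
        have haS : (Pi.single j 1 : Fin p → ℕ) ≠ Pi.single i 1 := single_ne hji 1 1 one_ne_zero
        have ha0 : (Pi.single j 1 : Fin p → ℕ) ≠ 0 := by
          intro h
          simpa using congrFun h j
        have hb0 : s - Pi.single j 1 ≠ 0 := by
          intro h
          rw [h, add_zero] at hab
          rw [← hab, sig_single] at h1
          exact h1 rfl
        by_cases hbe : s - Pi.single j 1 = Pi.single i 1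
        · refine Or.inr ⟨j, hji, ?_⟩
          rw [← hab, hbe, add_comm]
        · exact absurd hab (hmin _ haS _ hbe ha0 hb0)
      · push_neg at hsupp
        have hsi : s = Pi.single i (s i) := by
          funext k
          by_cases hk : k = i
          · subst hk; simp
          · rw [Pi.single_eq_of_ne hk]
            exact hsupp k hk
        have hsig : sig s = s i := by
          conv_lhs => rw [hsi]
          rw [sig_single]
        rcases (by omega : s i = 2 ∨ s i = 3 ∨ 4 ≤ s i) with h2 | h3 | h4
        · rw [h2] at hsi
          exact Or.inl (Or.inr (Or.inl hsi))
        · rw [h3] at hsi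
          exact Or.inl (Or.inr (Or.inr hsi))
        · have hab : Pi.single i 2 + Pi.single i (s i - 2) = s := by
            funext k
            by_cases hk : k = i
            · subst hk
              simp only [Pi.add_apply, Pi.single_eq_same]
              omega
            · rw [Pi.add_apply, Pi.single_eq_of_ne hk, Pi.single_eq_of_ne hk,
                hsupp k hk]
              rfl
          refine absurd hab (hmin _ ?_ _ ?_ ?_ ?_)
          · intro h
            have := congrFun h i
            simp only [Pi.single_eq_same] at this
            omega
          · intro h
            have := congrFun h i
            simp only [Pi.single_eq_same] at this
            omega
          · intro h
            have := congrFun h i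
            simp only [Pi.single_eq_same, Pi.zero_apply] at this
            omega
          · intro h
            have := congrFun h i
            simp only [Pi.single_eq_same, Pi.zero_apply] at this
            omega
  · have sig_pos : ∀ a : Fin p → ℕ, a ≠ 0 → sig a ≠ 0 :=
      fun a ha h => ha (sig_eq_zero.mp h)
    rintro ((⟨j, hji, rfl⟩ | rfl | rfl) | ⟨j, hji, rfl⟩)
    · refine ⟨single_ne hji 1 1 one_ne_zero, fun h => by simpa using congrFun h j,
        fun a ha b hb ha0 hb0 hab => ?_⟩
      have := congrArg sig hab
      rw [sig_add, sig_single] at this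
      have h1 := sig_pos a ha0
      have h2 := sig_pos b hb0
      omega
    · refine ⟨?_, ?_, ?_⟩
      · intro h
        have := congrFun h i
        simp only [Pi.single_eq_same] at this
        omega
      · intro h
        have := congrFun h i
        simp only [Pi.single_eq_same, Pi.zero_apply] at this
        omega
      · intro a ha b hb ha0 hb0 hab
        have hsig := congrArg sig hab
        rw [sig_add, sig_single] at hsig
        have h1 := sig_pos a ha0
        have h2 := sig_pos b hb0
        obtain ⟨k, hki, rfl⟩ := eq_single_of_sig_one_ne ha (by omega)
        have := congrFun hab k
        rw [Pi.add_apply, Pi.single_eq_same, Pi.single_eq_of_ne hki] at this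
        omega
    · refine ⟨?_, ?_, ?_⟩
      · intro h
        have := congrFun h i
        simp only [Pi.single_eq_same] at this
        omega
      · intro h
        have := congrFun h i
        simp only [Pi.single_eq_same, Pi.zero_apply] at this
        omega
      · intro a ha b hb ha0 hb0 hab
        have hsig := congrArg sig hab
        rw [sig_add, sig_single] at hsig
        have h1 := sig_pos a ha0
        have h2 := sig_pos b hb0
        rcases (by omega : sig a = 1 ∨ sig b = 1) with hA | hB
        · obtain ⟨k, hki, rfl⟩ := eq_single_of_sig_one_ne ha hA
          have := congrFun hab k
          rw [Pi.add_apply, Pi.single_eq_same, Pi.single_eq_of_ne hki] at this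
          omega
        · obtain ⟨k, hki, rfl⟩ := eq_single_of_sig_one_ne hb hB
          have := congrFun hab k
          rw [Pi.add_apply, Pi.single_eq_same, Pi.single_eq_of_ne hki] at this
          omega
    · refine ⟨?_, ?_, ?_⟩
      · intro h
        have := congrFun h j
        rw [Pi.add_apply, Pi.single_eq_of_ne hji, Pi.single_eq_same] at this
        omega
      · intro h
        have := congrFun h j
        rw [Pi.add_apply, Pi.single_eq_same, Pi.single_eq_of_ne hji,
          Pi.zero_apply] at this
        omega
      · intro a ha b hb ha0 hb0 hab
        have hsig := congrArg sig hab
        rw [sig_add, sig_add, sig_single, sig_single] at hsig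
        have h1 := sig_pos a ha0
        have h2 := sig_pos b hb0
        obtain ⟨k, hki, rfl⟩ := eq_single_of_sig_one_ne ha (by omega)
        obtain ⟨l, hli, rfl⟩ := eq_single_of_sig_one_ne hb (by omega)
        have := congrFun hab i
        rw [Pi.add_apply, Pi.add_apply, Pi.single_eq_same,
          Pi.single_eq_of_ne (Ne.symm hki), Pi.single_eq_of_ne (Ne.symm hli),
          Pi.single_eq_of_ne (Ne.symm hji)] at this
        omega

/-- Parameterization of the minimal generating set. -/
def g (i : Fin p) : Fin p ⊕ Fin p → (Fin p → ℕ)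
  | Sum.inl j => if j = i then Pi.single i 2 else Pi.single j 1
  | Sum.inr j => if j = i then Pi.single i 3 else Pi.single i 1 + Pi.single j 1

lemma sig_g_inl (i j : Fin p) (hj : j ≠ i) : sig (g i (Sum.inl j)) = 1 := by
  rw [g, if_neg hj, sig_single]

lemma g_inj (i : Fin p) : Function.Injective (g i) := by
  have key : ∀ j k : Fin p, j ≠ i → g i (Sum.inl j) ≠ g i (Sum.inr k) := by
    intro j k hj h
    have := congrArg sig h
    rw [sig_g_inl i j hj] at this
    by_cases hk : k = i
    · rw [g, if_pos hk, sig_single] at this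
      omega
    · rw [g, if_neg hk, sig_add, sig_single, sig_single] at this
      omega
  have key2 : ∀ k : Fin p, g i (Sum.inl i) ≠ g i (Sum.inr k) := by
    intro k h
    by_cases hk : k = i
    · rw [g, g, if_pos hk, if_pos rfl] at h
      have := congrFun h i
      rw [Pi.single_eq_same, Pi.single_eq_same] at this
      omega
    · rw [g, g, if_pos rfl, if_neg hk] at h
      have := congrFun h k
      rw [Pi.single_eq_of_ne hk, Pi.add_apply, Pi.single_eq_of_ne hk,
        Pi.single_eq_same] at this
      omega
  intro x y h
  match x, y with
  | Sum.inl j, Sum.inl k =>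
    by_cases hj : j = i <;> by_cases hk : k = i
    · rw [hj, hk]
    · exfalso
      rw [g, g, if_pos hj, if_neg hk] at h
      have := congrArg sig h
      rw [sig_single, sig_single] at this
      omega
    · exfalso
      rw [g, g, if_neg hj, if_pos hk] at h
      have := congrArg sig h
      rw [sig_single, sig_single] at this
      omega
    · rw [g, g, if_neg hj, if_neg hk] at h
      rw [single_one_inj h]
  | Sum.inl j, Sum.inr k =>
    exfalso
    by_cases hj : j = i
    · exact key2 k (by rw [← hj] at h ⊢; exact h)
    · exact key j k hj h
  | Sum.inr j, Sum.inl k =>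
    exfalso
    by_cases hk : k = i
    · exact key2 j (by rw [← hk] at h ⊢; exact h.symm)
    · exact key k j hk h.symm
  | Sum.inr j, Sum.inr k =>
    by_cases hj : j = i <;> by_cases hk : k = i
    · rw [hj, hk]
    · exfalso
      rw [g, g, if_pos hj, if_neg hk] at h
      have := congrArg sig h
      rw [sig_single, sig_add, sig_single, sig_single] at this
      omega
    · exfalso
      rw [g, g, if_neg hj, if_pos hk] at h
      have := congrArg sig h
      rw [sig_single, sig_add, sig_single, sig_single] at this
      omega
    · rw [g, g, if_neg hj, if_neg hk] at h
      rw [single_one_inj (add_left_cancel h)]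

lemma range_g (i : Fin p) :
    Set.range (g i) =
      ({x | ∃ j : Fin p, j ≠ i ∧ x = Pi.single j 1}
          ∪ {Pi.single i 2, Pi.single i 3})
        ∪ {x | ∃ j : Fin p, j ≠ i ∧ x = Pi.single i 1 + Pi.single j 1} := by
  ext x
  simp only [Set.mem_range, Set.mem_union, Set.mem_setOf_eq, Set.mem_insert_iff,
    Set.mem_singleton_iff]
  constructor
  · rintro ⟨(j | j), rfl⟩
    · by_cases hj : j = i
      · subst hj
        exact Or.inl (Or.inr (Or.inl (by rw [g, if_pos rfl])))
      · exact Or.inl (Or.inl ⟨j, hj, by rw [g, if_neg hj]⟩)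
    · by_cases hj : j = i
      · subst hj
        exact Or.inl (Or.inr (Or.inr (by rw [g, if_pos rfl])))
      · exact Or.inr ⟨j, hj, by rw [g, if_neg hj]⟩
  · rintro ((⟨j, hj, rfl⟩ | rfl | rfl) | ⟨j, hj, rfl⟩)
    · exact ⟨Sum.inl j, by rw [g, if_neg hj]⟩
    · exact ⟨Sum.inl i, by rw [g, if_pos rfl]⟩
    · exact ⟨Sum.inr i, by rw [g, if_pos rfl]⟩
    · exact ⟨Sum.inr j, by rw [g, if_neg hj]⟩

lemma ncard_range_g (i : Fin p) : (Set.range (g i)).ncard = 2 * p := by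
  rw [← Set.image_univ, Set.ncard_image_of_injective _ (g_inj i), Set.ncard_univ,
    Nat.card_eq_fintype_card, Fintype.card_sum, Fintype.card_fin]
  omega

end Stmt8Aux

open Stmt8Aux in
theorem stmt8 {p : ℕ} (hp : 1 ≤ p) (v : Fin p → ℕ)
    (hS : IsSubmonoidSet (Set.univ \ {v} : Set (Fin p → ℕ))) :
    ∃ i : Fin p, v = Pi.single i 1 ∧
      minGens (Set.univ \ {v} : Set (Fin p → ℕ)) =
        ({x | ∃ j : Fin p, j ≠ i ∧ x = Pi.single j 1}
            ∪ {(2 : ℕ) • Pi.single i 1, (3 : ℕ) • Pi.single i 1})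
          ∪ {x | ∃ j : Fin p, j ≠ i ∧ x = Pi.single i 1 + Pi.single j 1} ∧
      (minGens (Set.univ \ {v} : Set (Fin p → ℕ))).ncard = 2 * p := by
  obtain ⟨h0, hadd⟩ := hS
  have hv0 : v ≠ 0 := fun h => h0.2 (by simp [h])
  have hσ : sig v = 1 := by
    by_contra h1
    have h0' : sig v ≠ 0 := fun h => hv0 (sig_eq_zero.mp h)
    obtain ⟨j, hj⟩ : ∃ j, v j ≠ 0 := by
      by_contra hc
      push_neg at hc
      exact hv0 (funext hc)
    have hab : Pi.single j 1 + (v - Pi.single j 1) = v := by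
      funext k
      by_cases hk : k = j
      · subst hk
        simp only [Pi.add_apply, Pi.sub_apply, Pi.single_eq_same]
        omega
      · simp [Pi.single_eq_of_ne hk]
    have haS : Pi.single j (1 : ℕ) ∈ Set.univ \ {v} := by
      refine ⟨trivial, ?_⟩
      simp only [Set.mem_singleton_iff]
      intro h
      rw [← h, sig_single] at h1
      exact h1 rfl
    have hbS : v - Pi.single j 1 ∈ Set.univ \ {v} := by
      refine ⟨trivial, ?_⟩
      simp only [Set.mem_singleton_iff]
      intro h
      have hc := congrArg sig hab
      rw [h, sig_add, sig_single] at hc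
      omega
    have := hadd _ haS _ hbS
    rw [hab] at this
    exact this.2 rfl
  obtain ⟨i, rfl⟩ := sig_eq_one hσ
  refine ⟨i, rfl, ?_, ?_⟩
  · rw [smul_single 2 i, smul_single 3 i]
    exact minGens_single i
  · rw [minGens_single i, ← range_g i]
    exact ncard_range_g i
end

section
/- Let p ≥ 2, let h be an integer with h > 1, let k ∈ {1, …, p−1}, and let S be the submonoid of ℕ^p generated by {e₁, …, e_{p−1}, 2e_p, 3e_p, e_p + h·e_k} ∪ {e_p + e_i : i ∈ {1, …, p−1}, i ≠ k}. Then the set of gaps of S is ℕ^p \ S = {e_p + m·e_k : 0 ≤ m ≤ h−1}; in particular S is an ℕ^p-semigroup of genus h, and its embedding dimension is 2p. -/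
/-- The generating set
$\{e_1,…,e_{p-1},2e_p,3e_p,e_p+he_k\} ∪ \{e_p+e_i \mid i ∈ [p-1]\setminus\{k\}\}$,
where the distinguished index $p$ corresponds to $⟨p-1,\_⟩ : \mathrm{Fin}\ p$. -/
def gens9 (p h : ℕ) (hp : 2 ≤ p) (k : Fin p) : Set (Fin p → ℕ) :=
  ({x | ∃ j : Fin p, j ≠ ⟨p - 1, by omega⟩ ∧ x = Pi.single j 1}
      ∪ {(2 : ℕ) • Pi.single (⟨p - 1, by omega⟩ : Fin p) 1,
          (3 : ℕ) • Pi.single (⟨p - 1, by omega⟩ : Fin p) 1,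
          Pi.single (⟨p - 1, by omega⟩ : Fin p) 1 + h • Pi.single k 1})
    ∪ {x | ∃ j : Fin p, j ≠ ⟨p - 1, by omega⟩ ∧ j ≠ k ∧
        x = Pi.single (⟨p - 1, by omega⟩ : Fin p) 1 + Pi.single j 1}

/-!
Write `P` for the last index. An element `x` with `x P = 0` is a sum of the `e_i`, `i ≠ P`; one
with `x P ≥ 2` lies above some `a • 2e_P + b • 3e_P` with the same `P`-coordinate; and one with
`x P = 1` lies above `e_P + h e_k` or some `e_P + e_i`, `i ≠ k`, unless it is `e_P + m e_k` with
`m < h`. Conversely these `h` elements are gaps, because their complement is closed under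
addition: if `a + b` is a gap, the summand carrying the `P`-coordinate is already a gap.

Minimal generators of a closure always lie in the generating set, and here each generator is
minimal: any splitting of it into two nonzero elements has a summand `e_P + m e_i` with `m` below
the corresponding coefficient, which is a gap.
-/

namespace NpSemigroup

variable {p : ℕ}

lemma minGens_closure_subset (A : Set (Fin p → ℕ)) :
    minGens (AddSubmonoid.closure A : Set (Fin p → ℕ)) ⊆ A := by
  rintro s ⟨hs, hs0, hmin⟩
  have hdecomp : ∀ x ∈ AddSubmonoid.closure A, x = 0 ∨ x ∈ A ∨
      ∃ a ∈ AddSubmonoid.closure A, ∃ b ∈ AddSubmonoid.closure A, a ≠ 0 ∧ b ≠ 0 ∧ a + b = x := by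
    intro x hx
    induction hx using AddSubmonoid.closure_induction with
    | mem x hx => exact .inr (.inl hx)
    | zero => exact .inl rfl
    | add x y hx hy ihx ihy =>
      by_cases hx0 : x = 0
      · simpa [hx0] using ihy
      by_cases hy0 : y = 0
      · simpa [hy0] using ihx
      exact .inr (.inr ⟨x, hx, y, hy, hx0, hy0, rfl⟩)
  obtain h0 | hA | ⟨a, ha, b, hb, ha0, hb0, hab⟩ := hdecomp s hs
  · exact absurd h0 hs0
  · exact hA
  · exact absurd hab (hmin a ha b hb ha0 hb0)

lemma nsmul_mem_of_ne_one {M : Type*} [AddMonoid M] {S : AddSubmonoid M} {v : M}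
    (h2 : 2 • v ∈ S) (h3 : 3 • v ∈ S) {n : ℕ} (hn : n ≠ 1) : n • v ∈ S := by
  obtain ⟨a, b, rfl⟩ : ∃ a b, n = 2 * a + 3 * b := by
    rcases Nat.even_or_odd' n with ⟨c, rfl | rfl⟩
    · exact ⟨c, 0, by ring⟩
    · exact ⟨c - 1, 1, by omega⟩
  rw [add_nsmul, mul_nsmul, mul_nsmul]
  exact S.add_mem (S.nsmul_mem h2 a) (S.nsmul_mem h3 b)

lemma apply_ne_zero_of_forall_ne {ι M : Type*} [Zero M] {c : ι → M} {j : ι} (hc : c ≠ 0)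
    (hz : ∀ i, i ≠ j → c i = 0) : c j ≠ 0 := by
  contrapose! hc
  funext i
  by_cases hij : i = j
  · rw [hij, hc, Pi.zero_apply]
  · exact hz i hij

lemma eq_zero_or_eq_zero_of_add_eq_single {a b : Fin p → ℕ} {j : Fin p}
    (hab : a + b = Pi.single j 1) : a = 0 ∨ b = 0 := by
  by_contra! ⟨ha, hb⟩
  have hz (i : Fin p) (hij : i ≠ j) : a i = 0 ∧ b i = 0 := by simpa [hij] using congrFun hab i
  have hj : a j + b j = 1 := by simpa using congrFun hab j
  have := apply_ne_zero_of_forall_ne ha fun i hij => (hz i hij).1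
  have := apply_ne_zero_of_forall_ne hb fun i hij => (hz i hij).2
  omega

variable {P k : Fin p} {h : ℕ}

def gens (P k : Fin p) (h : ℕ) : Set (Fin p → ℕ) :=
  ({x | ∃ j : Fin p, j ≠ P ∧ x = Pi.single j 1}
      ∪ {(2 : ℕ) • Pi.single P 1, (3 : ℕ) • Pi.single P 1, Pi.single P 1 + h • Pi.single k 1})
    ∪ {x | ∃ j : Fin p, j ≠ P ∧ j ≠ k ∧ x = Pi.single P 1 + Pi.single j 1}

def gaps (P k : Fin p) (h : ℕ) : Set (Fin p → ℕ) :=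
  {x | ∃ m < h, x = Pi.single P 1 + m • Pi.single k 1}

lemma single_mem_gens {j : Fin p} (hjP : j ≠ P) : Pi.single j 1 ∈ gens P k h :=
  .inl (.inl ⟨j, hjP, rfl⟩)

lemma two_nsmul_single_mem_gens : (2 : ℕ) • Pi.single P 1 ∈ gens P k h :=
  .inl (.inr (.inl rfl))

lemma three_nsmul_single_mem_gens : (3 : ℕ) • Pi.single P 1 ∈ gens P k h :=
  .inl (.inr (.inr (.inl rfl)))

lemma single_add_nsmul_single_mem_gens : Pi.single P 1 + h • Pi.single k 1 ∈ gens P k h :=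
  .inl (.inr (.inr (.inr rfl)))

lemma single_add_single_mem_gens {j : Fin p} (hjP : j ≠ P) (hjk : j ≠ k) :
    Pi.single P 1 + Pi.single j 1 ∈ gens P k h :=
  .inr ⟨j, hjP, hjk, rfl⟩

lemma mem_gaps_iff (hkP : k ≠ P) {x : Fin p → ℕ} :
    x ∈ gaps P k h ↔ x P = 1 ∧ x k < h ∧ ∀ i, i ≠ P → i ≠ k → x i = 0 := by
  constructor
  · rintro ⟨m, hm, rfl⟩
    refine ⟨?_, ?_, fun i hiP hik => ?_⟩ <;> simp [*, hkP.symm]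
  · rintro ⟨hP, hk, hz⟩
    refine ⟨x k, hk, funext fun i => ?_⟩
    by_cases hiP : i = P
    · subst hiP; simp [hP, hkP.symm]
    by_cases hik : i = k
    · subst hik; simp [hiP]
    · simp [hiP, hik, hz i hiP hik]

lemma mem_gaps_or_mem_gaps_of_add_mem (hkP : k ≠ P) {a b : Fin p → ℕ}
    (hab : a + b ∈ gaps P k h) : a ∈ gaps P k h ∨ b ∈ gaps P k h := by
  simp only [mem_gaps_iff hkP] at hab ⊢
  obtain ⟨hP, hk, hz⟩ := hab
  simp only [Pi.add_apply] at hP hk hz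
  have hz' : ∀ i, i ≠ P → i ≠ k → a i = 0 ∧ b i = 0 := fun i hiP hik => by
    have := hz i hiP hik; omega
  rcases Nat.add_eq_one_iff.mp hP with ⟨-, hbP⟩ | ⟨haP, -⟩
  · exact .inr ⟨hbP, by omega, fun i hiP hik => (hz' i hiP hik).2⟩
  · exact .inl ⟨haP, by omega, fun i hiP hik => (hz' i hiP hik).1⟩

lemma zero_notMem_gaps : (0 : Fin p → ℕ) ∉ gaps P k h := by
  rintro ⟨m, -, hm⟩
  have := congrFun hm P
  simp only [Pi.zero_apply, Pi.add_apply, Pi.single_eq_same] at this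
  omega

def gapsCompl (hkP : k ≠ P) (h : ℕ) : AddSubmonoid (Fin p → ℕ) where
  carrier := (gaps P k h)ᶜ
  zero_mem' := zero_notMem_gaps
  add_mem' ha hb hab := (mem_gaps_or_mem_gaps_of_add_mem hkP hab).elim ha hb

lemma gens_disjoint_gaps (hkP : k ≠ P) : Disjoint (gens P k h) (gaps P k h) := by
  rw [Set.disjoint_left]
  rintro g ((⟨j, hjP, rfl⟩ | rfl | rfl | rfl) | ⟨j, hjP, hjk, rfl⟩) hg <;>
    rw [mem_gaps_iff hkP] at hg
  · simpa [hjP.symm] using hg.1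
  · simpa using hg.1
  · simpa using hg.1
  · simpa [hkP] using hg.2.1
  · simpa [hjP] using hg.2.2 j hjP hjk

lemma mem_closure_gens_of_apply_eq_zero {x : Fin p → ℕ} (hx : x P = 0) :
    x ∈ AddSubmonoid.closure (gens P k h) := by
  rw [← Finset.univ_sum_single x]
  refine AddSubmonoid.sum_mem _ fun j _ => ?_
  by_cases hjP : j = P
  · simp [hjP, hx]
  · rw [← mul_one (x j), ← smul_eq_mul, Pi.single_smul]
    exact AddSubmonoid.nsmul_mem _ (AddSubmonoid.subset_closure (single_mem_gens hjP)) _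

lemma mem_closure_gens_of_le {g x : Fin p → ℕ} (hg : g ∈ AddSubmonoid.closure (gens P k h))
    (hgx : g ≤ x) (hxP : x P ≤ g P) : x ∈ AddSubmonoid.closure (gens P k h) := by
  rw [← add_tsub_cancel_of_le hgx]
  exact add_mem hg (mem_closure_gens_of_apply_eq_zero (Nat.sub_eq_zero_of_le hxP))

lemma mem_closure_gens_of_notMem_gaps (hkP : k ≠ P) {x : Fin p → ℕ} (hx : x ∉ gaps P k h) :
    x ∈ AddSubmonoid.closure (gens P k h) := by
  rw [mem_gaps_iff hkP] at hx
  push Not at hx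
  obtain hxP | hxP | hxP : x P = 0 ∨ x P = 1 ∨ 2 ≤ x P := by omega
  · exact mem_closure_gens_of_apply_eq_zero hxP
  · by_cases hxk : x k < h
    · obtain ⟨j, hjP, hjk, hxj⟩ := hx hxP hxk
      refine mem_closure_gens_of_le
        (AddSubmonoid.subset_closure (single_add_single_mem_gens hjP hjk)) (fun i => ?_)
        (by simp [hxP, hjP.symm])
      simp only [Pi.add_apply, Pi.single_apply]
      split_ifs <;> subst_vars <;> omega
    · refine mem_closure_gens_of_le
        (AddSubmonoid.subset_closure single_add_nsmul_single_mem_gens) (fun i => ?_)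
        (by simp [hxP, hkP.symm])
      simp only [Pi.add_apply, Pi.smul_apply, Pi.single_apply, smul_eq_mul]
      split_ifs <;> subst_vars <;> omega
  · refine mem_closure_gens_of_le (g := x P • Pi.single P 1)
      (nsmul_mem_of_ne_one (AddSubmonoid.subset_closure two_nsmul_single_mem_gens)
        (AddSubmonoid.subset_closure three_nsmul_single_mem_gens) (by omega)) (fun i => ?_)
      (by simp)
    simp only [Pi.smul_apply, Pi.single_apply, smul_eq_mul]
    split_ifs <;> subst_vars <;> omega

theorem coe_closure_gens (hkP : k ≠ P) :
    (AddSubmonoid.closure (gens P k h) : Set (Fin p → ℕ)) = (gaps P k h)ᶜ := by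
  refine subset_antisymm ?_ fun x hx => mem_closure_gens_of_notMem_gaps hkP hx
  show AddSubmonoid.closure (gens P k h) ≤ gapsCompl hkP h
  exact AddSubmonoid.closure_le.mpr (gens_disjoint_gaps hkP).subset_compl_right

lemma gaps_eq_image :
    gaps P k h = (fun m : ℕ => Pi.single P 1 + m • Pi.single k 1) '' Set.Iio h := by
  ext x
  simp only [gaps, Set.mem_ofPred_eq, Set.mem_image, Set.mem_Iio, eq_comm]

lemma finite_gaps : (gaps P k h).Finite := by
  rw [gaps_eq_image]
  exact (Set.finite_Iio h).image _

lemma ncard_gaps (hkP : k ≠ P) : (gaps P k h).ncard = h := by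
  have hinj : Function.Injective fun m : ℕ => Pi.single P 1 + m • (Pi.single k 1 : Fin p → ℕ) :=
    fun m n hmn => by simpa [hkP] using congrFun hmn k
  rw [gaps_eq_image, Set.ncard_image_of_injective _ hinj, Set.ncard_Iio_nat]

lemma single_mem_gaps (hh : 0 < h) : Pi.single P 1 ∈ gaps P k h :=
  ⟨0, hh, by rw [zero_smul, add_zero]⟩

lemma eq_or_eq_of_add_eq_nsmul_single {a b : Fin p → ℕ} {n : ℕ} (hn : n ≤ 3)
    (hab : a + b = n • Pi.single P 1) (ha : a ≠ 0) (hb : b ≠ 0) :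
    a = Pi.single P 1 ∨ b = Pi.single P 1 := by
  have hz (i : Fin p) (hiP : i ≠ P) : a i = 0 ∧ b i = 0 := by
    simpa [hiP] using congrFun hab i
  have hP : a P + b P = n := by simpa using congrFun hab P
  have haP := apply_ne_zero_of_forall_ne ha fun i hiP => (hz i hiP).1
  have hbP := apply_ne_zero_of_forall_ne hb fun i hiP => (hz i hiP).2
  have hsingle (c : Fin p → ℕ) (hcP : c P = 1) (hcz : ∀ i, i ≠ P → c i = 0) : c = Pi.single P 1 :=
    funext fun i => by by_cases hiP : i = P <;> simp [hiP, hcP, hcz]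
  obtain haP1 | hbP1 : a P = 1 ∨ b P = 1 := by omega
  · exact .inl (hsingle a haP1 fun i hiP => (hz i hiP).1)
  · exact .inr (hsingle b hbP1 fun i hiP => (hz i hiP).2)

lemma mem_gaps_or_mem_gaps_of_add_eq {j : Fin p} (hjP : j ≠ P) {c : ℕ} {a b : Fin p → ℕ}
    (hab : a + b = Pi.single P 1 + c • Pi.single j 1) (ha : a ≠ 0) (hb : b ≠ 0) :
    a ∈ gaps P j c ∨ b ∈ gaps P j c := by
  have hz (i : Fin p) (hiP : i ≠ P) (hij : i ≠ j) : a i = 0 ∧ b i = 0 := by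
    simpa [hiP, hij] using congrFun hab i
  have hP : a P + b P = 1 := by simpa [hjP.symm] using congrFun hab P
  have hj : a j + b j = c := by simpa [hjP] using congrFun hab j
  have hnz (d : Fin p → ℕ) (hd : d ≠ 0) (hdP : d P = 0) (hdz : ∀ i, i ≠ P → i ≠ j → d i = 0) :
      d j ≠ 0 :=
    apply_ne_zero_of_forall_ne hd fun i hij => by
      by_cases hiP : i = P
      · rwa [hiP]
      · exact hdz i hiP hij
  rw [mem_gaps_iff hjP, mem_gaps_iff hjP]
  obtain ⟨haP, hbP⟩ | ⟨haP, hbP⟩ := Nat.add_eq_one_iff.mp hP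
  · have := hnz a ha haP fun i hiP hij => (hz i hiP hij).1
    exact .inr ⟨hbP, by omega, fun i hiP hij => (hz i hiP hij).2⟩
  · have := hnz b hb hbP fun i hiP hij => (hz i hiP hij).2
    exact .inl ⟨haP, by omega, fun i hiP hij => (hz i hiP hij).1⟩

lemma gaps_one_subset {j : Fin p} (hh : 0 < h) : gaps P j 1 ⊆ gaps P k h := by
  rintro x ⟨m, hm, rfl⟩
  obtain rfl : m = 0 := Nat.lt_one_iff.mp hm
  simpa using single_mem_gaps hh

lemma mem_gaps_or_mem_gaps_of_add_mem_gens (hkP : k ≠ P) (hh : 0 < h) {a b : Fin p → ℕ}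
    (hab : a + b ∈ gens P k h) (ha : a ≠ 0) (hb : b ≠ 0) : a ∈ gaps P k h ∨ b ∈ gaps P k h := by
  have hP (c : Fin p → ℕ) (hc : c = Pi.single P 1) : c ∈ gaps P k h := hc ▸ single_mem_gaps hh
  rcases hab with (⟨j, -, hab⟩ | hab | hab | hab) | ⟨j, hjP, -, hab⟩
  · exact ((eq_zero_or_eq_zero_of_add_eq_single hab).elim ha hb).elim
  · exact (eq_or_eq_of_add_eq_nsmul_single (by norm_num) hab ha hb).imp
      (hP a) (hP b)
  · exact (eq_or_eq_of_add_eq_nsmul_single le_rfl hab ha hb).imp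
      (hP a) (hP b)
  · exact mem_gaps_or_mem_gaps_of_add_eq hkP hab ha hb
  · rw [← one_nsmul (Pi.single j 1)] at hab
    exact (mem_gaps_or_mem_gaps_of_add_eq hjP hab ha hb).imp
      (gaps_one_subset hh ·) (gaps_one_subset hh ·)

lemma zero_notMem_gens : (0 : Fin p → ℕ) ∉ gens P k h := by
  rintro ((⟨j, -, h0⟩ | h0 | h0 | h0) | ⟨j, -, -, h0⟩)
  · simpa using congrFun h0 j
  · simpa using congrFun h0 P
  · simpa using congrFun h0 P
  all_goals simpa using (add_eq_zero.mp h0.symm).1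

theorem minGens_closure_gens (hkP : k ≠ P) (hh : 0 < h) :
    minGens (AddSubmonoid.closure (gens P k h) : Set (Fin p → ℕ)) = gens P k h := by
  refine (minGens_closure_subset _).antisymm fun g hg =>
    ⟨AddSubmonoid.subset_closure hg, fun hg0 => zero_notMem_gens (hg0 ▸ hg), ?_⟩
  rintro a ha b hb ha0 hb0 rfl
  rw [coe_closure_gens hkP] at ha hb
  exact (mem_gaps_or_mem_gaps_of_add_mem_gens hkP hh hg ha0 hb0).elim ha hb

lemma single_one_injective : Function.Injective fun j : Fin p => (Pi.single j 1 : Fin p → ℕ) :=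
  fun i j hij => by
    by_contra hne
    simpa [hne] using congrFun hij i

lemma gens_eq_union : gens P k h =
    ((fun j => Pi.single j 1) '' {P}ᶜ
      ∪ {(2 : ℕ) • Pi.single P 1, (3 : ℕ) • Pi.single P 1, Pi.single P 1 + h • Pi.single k 1})
    ∪ (fun j => Pi.single P 1 + Pi.single j 1) '' {P, k}ᶜ := by
  ext x
  simp [gens, eq_comm, and_assoc]

lemma ncard_gens (hkP : k ≠ P) : (gens P k h).ncard = 2 * p := by
  have hp : 2 ≤ p := by
    simpa [Finset.card_pair hkP] using Finset.card_le_univ ({k, P} : Finset (Fin p))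
  have hB : ({(2 : ℕ) • Pi.single P 1, (3 : ℕ) • Pi.single P 1,
      Pi.single P 1 + h • Pi.single k 1} : Set (Fin p → ℕ)).ncard = 3 := by
    rw [Set.ncard_insert_of_notMem, Set.ncard_pair]
    · intro e; simpa [hkP.symm] using congrFun e P
    · rintro (e | e)
      · simpa using congrFun e P
      · simpa [hkP] using congrFun e P
  have hAB : Disjoint ((fun j => Pi.single j 1) '' {P}ᶜ)
      {(2 : ℕ) • Pi.single P 1, (3 : ℕ) • Pi.single P 1, Pi.single P 1 + h • Pi.single k 1} := by
    rw [Set.disjoint_left]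
    rintro x ⟨j, hjP, rfl⟩ (e | e | e) <;>
      simpa [Ne.symm hjP, hkP.symm] using congrFun e P
  have hABC : Disjoint ((fun j => Pi.single j 1) '' {P}ᶜ
      ∪ {(2 : ℕ) • Pi.single P 1, (3 : ℕ) • Pi.single P 1, Pi.single P 1 + h • Pi.single k 1})
      ((fun j => Pi.single P 1 + Pi.single j 1) '' {P, k}ᶜ) := by
    rw [Set.disjoint_right]
    rintro x ⟨j, hj, rfl⟩ (⟨i, hiP, e⟩ | e | e | e) <;>
      simp only [Set.mem_compl_iff, Set.mem_insert_iff, Set.mem_singleton_iff, not_or] at hj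
    · simpa [hj.1, Ne.symm hiP] using congrFun e P
    · simpa [Ne.symm hj.1] using congrFun e P
    · simpa [Ne.symm hj.1] using congrFun e P
    · simpa [hj.1, hj.2] using congrFun e j
  rw [gens_eq_union, Set.ncard_union_eq hABC, Set.ncard_union_eq hAB, hB,
    Set.ncard_image_of_injective _ single_one_injective,
    Set.ncard_image_of_injective _ fun i j hij => single_one_injective (add_left_cancel hij),
    Set.ncard_compl, Set.ncard_compl, Set.ncard_singleton, Set.ncard_pair hkP.symm,
    Nat.card_eq_fintype_card, Fintype.card_fin]
  omega

end NpSemigroup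

open NpSemigroup in
theorem stmt9 {p : ℕ} (hp : 2 ≤ p) (h : ℕ) (hh : 1 < h)
    (k : Fin p) (hk : (k : ℕ) < p - 1) :
    {x : Fin p → ℕ | x ∉ AddSubmonoid.closure (gens9 p h hp k)} =
      {x : Fin p → ℕ | ∃ m : ℕ, m < h ∧
        x = Pi.single (⟨p - 1, by omega⟩ : Fin p) 1 + m • Pi.single k 1} ∧
    {x : Fin p → ℕ | x ∉ AddSubmonoid.closure (gens9 p h hp k)}.Finite ∧
    {x : Fin p → ℕ | x ∉ AddSubmonoid.closure (gens9 p h hp k)}.ncard = h ∧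
    (minGens ((AddSubmonoid.closure (gens9 p h hp k) : AddSubmonoid (Fin p → ℕ)) :
        Set (Fin p → ℕ))).ncard = 2 * p := by
  set P : Fin p := ⟨p - 1, by omega⟩
  have hkP : k ≠ P := Fin.ne_of_val_ne hk.ne
  have hgens : gens9 p h hp k = gens P k h := rfl
  have hgaps : {x : Fin p → ℕ | x ∉ AddSubmonoid.closure (gens9 p h hp k)} = gaps P k h := by
    rw [← compl_compl (gaps P k h), hgens, ← coe_closure_gens hkP]
    rfl
  refine ⟨hgaps, hgaps ▸ finite_gaps, hgaps ▸ ncard_gaps hkP, ?_⟩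
  rw [hgens, minGens_closure_gens hkP (by omega), ncard_gens hkP]
end

section
/- Fix a monomial order ≺ on ℕ^p whose initial segments are finite. Let p ≥ 2, let h be an integer with h > 1, let k ∈ {1, …, p−1}, and let S be the submonoid of ℕ^p generated by {e₁, …, e_{p−1}, 2e_p, 3e_p, e_p + h·e_k} ∪ {e_p + e_i : i ∈ {1, …, p−1}, i ≠ k}. Then S is an ℕ^p-semigroup satisfying the extended Wilf conjecture: n(S)·e(S) ≥ N(Fb(S)) + 1. -/
/-!
Write `L` for the distinguished index `p`. The gaps of `S` are exactly `e_L + t e_k` with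
`t < h`. The complement of this family is closed under addition (if `a + b` is a gap, the
summand carrying the single unit in coordinate `L` lies below a gap and is a gap itself) and
contains the generators. Conversely, every other `x` lies above a generator `g ∈ S` with
`g L = x L` (namely `x L • e_L`, `e_L + h e_k` or `e_L + e_j`), and `x - g` is a combination
of the `e_j`, `j ≠ L`. Hence `g(S) = h`. The elements `t e_k` with `t < h` lie in `S` below
the gap `e_L + (h - 1) e_k ⪯ Fb`, so `n(S) ≥ h`; and `e_k`, `2 e_L`, `3 e_L` are minimal
generators because `e_L ∉ S`, so `e(S) ≥ 3`. Then `n(S) e(S) ≥ 3 n(S) ≥ n(S) + h + 1`.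
-/

open Set

theorem IsMonomialOrder.prec_of_le_of_ne {p : ℕ} {prec : (Fin p → ℕ) → (Fin p → ℕ) → Prop}
    (hprec : IsMonomialOrder prec) {a b : Fin p → ℕ} (hab : a ≤ b) (hne : a ≠ b) :
    prec a b := by
  obtain ⟨-, -, -, hadd, hzero, -⟩ := hprec
  have hpos : prec 0 (b - a) :=
    hzero _ fun h0 => hne (le_antisymm hab (tsub_eq_zero_iff_le.mp h0))
  simpa [tsub_add_cancel_of_le hab] using hadd _ _ a hpos

theorem eq_zero_or_mem_or_exists_add_of_mem_closure {M : Type*} [AddCommMonoid M] {G : Set M}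
    {s : M} (hs : s ∈ AddSubmonoid.closure G) :
    s = 0 ∨ s ∈ G ∨ ∃ a ∈ AddSubmonoid.closure G, ∃ b ∈ AddSubmonoid.closure G,
      a ≠ 0 ∧ b ≠ 0 ∧ a + b = s := by
  induction hs using AddSubmonoid.closure_induction with
  | mem x hx => exact Or.inr (Or.inl hx)
  | zero => exact Or.inl rfl
  | add x y hx hy ihx ihy =>
    rcases eq_or_ne x 0 with rfl | hx0
    · simpa using ihy
    rcases eq_or_ne y 0 with rfl | hy0
    · simpa using ihx
    exact Or.inr (Or.inr ⟨x, hx, y, hy, hx0, hy0, rfl⟩)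

theorem minGens_closure_subset {p : ℕ} (G : Set (Fin p → ℕ)) :
    minGens (AddSubmonoid.closure G : Set (Fin p → ℕ)) ⊆ G := by
  rintro s ⟨hsS, hs0, hmin⟩
  rcases eq_zero_or_mem_or_exists_add_of_mem_closure hsS with
    rfl | hsG | ⟨a, ha, b, hb, ha0, hb0, hab⟩
  · exact absurd rfl hs0
  · exact hsG
  · exact absurd hab (hmin a ha b hb ha0 hb0)

theorem eq_single_of_le_single {p : ℕ} {i : Fin p} {n : ℕ} {c : Fin p → ℕ}
    (hc : c ≤ Pi.single i n) : c = Pi.single i (c i) := by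
  funext j
  by_cases hj : j = i
  · subst hj; simp
  · simpa [hj] using hc j

theorem isMinGen_single {p : ℕ} {S : Set (Fin p → ℕ)} {i : Fin p} {n : ℕ}
    (hn : Pi.single i n ∈ S) (hn0 : n ≠ 0)
    (hsplit : ∀ a b, Pi.single i a ∈ S → Pi.single i b ∈ S → a + b = n → a = 0 ∨ b = 0) :
    IsMinGen S (Pi.single i n) := by
  refine ⟨hn, by simpa using hn0, fun a ha b hb ha0 hb0 hab => ?_⟩
  have ha' : a = Pi.single i (a i) := eq_single_of_le_single (hab ▸ le_self_add)
  have hb' : b = Pi.single i (b i) := eq_single_of_le_single (hab ▸ le_add_self)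
  rcases hsplit (a i) (b i) (ha' ▸ ha) (hb' ▸ hb) (by simpa using congrFun hab i) with h0 | h0
  · exact ha0 (by rw [ha', h0, Pi.single_zero])
  · exact hb0 (by rw [hb', h0, Pi.single_zero])

def semigroupGens {p : ℕ} (L k : Fin p) (h : ℕ) : Set (Fin p → ℕ) :=
  ({x | ∃ j : Fin p, j ≠ L ∧ x = Pi.single j 1}
      ∪ {(2 : ℕ) • Pi.single L 1, (3 : ℕ) • Pi.single L 1, Pi.single L 1 + h • Pi.single k 1})
    ∪ {x | ∃ j : Fin p, j ≠ L ∧ j ≠ k ∧ x = Pi.single L 1 + Pi.single j 1}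

section semigroupGens

variable {p : ℕ} {L k : Fin p} {h : ℕ}

theorem single_eq_nsmul_single_one (i : Fin p) (n : ℕ) :
    (Pi.single i n : Fin p → ℕ) = n • Pi.single i 1 := by
  rw [← Pi.single_smul', smul_eq_mul, mul_one]

theorem semigroupGens_finite : (semigroupGens L k h).Finite := by
  refine ((finite_range fun j => (Pi.single j 1 : Fin p → ℕ)).subset ?_ |>.union
    (by simp)).union ((finite_range fun j => Pi.single L 1 + Pi.single j 1).subset ?_)
  · rintro _ ⟨j, -, rfl⟩; exact ⟨j, rfl⟩
  · rintro _ ⟨j, -, -, rfl⟩; exact ⟨j, rfl⟩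

theorem mem_closure_of_apply_eq_zero {x : Fin p → ℕ} (hx : x L = 0) :
    x ∈ AddSubmonoid.closure (semigroupGens L k h) := by
  rw [← Finset.univ_sum_single x]
  refine AddSubmonoid.sum_mem _ fun j _ => ?_
  by_cases hj : j = L
  · simp [hj, hx]
  · rw [single_eq_nsmul_single_one]
    have hgen : Pi.single j 1 ∈ semigroupGens L k h := Or.inl (Or.inl ⟨j, hj, rfl⟩)
    exact nsmul_mem (AddSubmonoid.subset_closure hgen) _

theorem single_mem_closure_of_ne_one {m : ℕ} (hm : m ≠ 1) :
    Pi.single L m ∈ AddSubmonoid.closure (semigroupGens L k h) := by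
  have h2 : (2 : ℕ) • (Pi.single L 1 : Fin p → ℕ) ∈ AddSubmonoid.closure (semigroupGens L k h) :=
    AddSubmonoid.subset_closure (Or.inl (Or.inr (by simp)))
  have h3 : (3 : ℕ) • (Pi.single L 1 : Fin p → ℕ) ∈ AddSubmonoid.closure (semigroupGens L k h) :=
    AddSubmonoid.subset_closure (Or.inl (Or.inr (by simp)))
  obtain ⟨a, rfl | rfl⟩ : ∃ a, m = a * 2 ∨ m = a * 2 + 3 :=
    ⟨if m % 2 = 0 then m / 2 else (m - 3) / 2, by split_ifs <;> omega⟩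
  · rw [single_eq_nsmul_single_one, mul_smul]
    exact AddSubmonoid.nsmul_mem _ h2 a
  · rw [single_eq_nsmul_single_one, add_smul, mul_smul]
    exact add_mem (AddSubmonoid.nsmul_mem _ h2 a) h3

theorem mem_closure_of_le_of_apply_eq {g x : Fin p → ℕ}
    (hg : g ∈ AddSubmonoid.closure (semigroupGens L k h)) (hgx : g ≤ x) (hL : g L = x L) :
    x ∈ AddSubmonoid.closure (semigroupGens L k h) := by
  rw [← add_tsub_cancel_of_le hgx]
  exact add_mem hg (mem_closure_of_apply_eq_zero (by simp [hL]))

variable (hkL : k ≠ L)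
include hkL

theorem single_add_single_eq {x : Fin p → ℕ} (hxL : x L = 1)
    (hx : ∀ j, j ≠ L → j ≠ k → x j = 0) : Pi.single L 1 + Pi.single k (x k) = x := by
  funext j
  by_cases hjL : j = L
  · subst hjL; simp [hxL, hkL.symm]
  by_cases hjk : j = k
  · subst hjk; simp [hkL]
  · simp [hjL, hjk, hx j hjL hjk]

theorem le_single_add_single {c : Fin p → ℕ} {t : ℕ} (hc : c ≤ Pi.single L 1 + Pi.single k t)
    (hcL : c L = 1) : c k ≤ t ∧ Pi.single L 1 + Pi.single k (c k) = c := by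
  refine ⟨by simpa [hkL] using hc k, single_add_single_eq hkL hcL fun j hjL hjk => ?_⟩
  simpa [hjL, hjk] using hc j

theorem mem_closure_of_forall_ne {x : Fin p → ℕ}
    (hx : ∀ t < h, Pi.single L 1 + Pi.single k t ≠ x) :
    x ∈ AddSubmonoid.closure (semigroupGens L k h) := by
  by_cases hxL : x L = 1
  swap
  · exact mem_closure_of_le_of_apply_eq (single_mem_closure_of_ne_one hxL)
      (fun j => by by_cases hj : j = L <;> simp [hj]) (by simp)
  by_cases hxk : h ≤ x k
  · refine mem_closure_of_le_of_apply_eq (g := Pi.single L 1 + h • Pi.single k 1)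
      (AddSubmonoid.subset_closure (Or.inl (Or.inr (by simp)))) (fun j => ?_) (by simp [hxL, hkL])
    by_cases hjL : j = L
    · subst hjL; simp [hxL, hkL.symm]
    by_cases hjk : j = k
    · subst hjk; simpa [hjL] using hxk
    · simp [hjL, hjk]
  by_cases hj : ∃ j, j ≠ L ∧ j ≠ k ∧ x j ≠ 0
  · obtain ⟨j, hjL, hjk, hxj⟩ := hj
    refine mem_closure_of_le_of_apply_eq (g := Pi.single L 1 + Pi.single j 1)
      (AddSubmonoid.subset_closure (Or.inr ⟨j, hjL, hjk, rfl⟩)) (fun i => ?_) (by simp [hxL, hjL])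
    by_cases hiL : i = L
    · subst hiL; simp [hxL, hjL.symm]
    by_cases hij : i = j
    · subst hij; simpa [hiL] using Nat.one_le_iff_ne_zero.mpr hxj
    · simp [hiL, hij]
  push Not at hj
  exact absurd (single_add_single_eq hkL hxL hj) (hx (x k) (by omega))

theorem single_add_single_notMem_closure {t : ℕ} (ht : t < h) :
    Pi.single L 1 + Pi.single k t ∉ AddSubmonoid.closure (semigroupGens L k h) := by
  suffices ∀ x ∈ AddSubmonoid.closure (semigroupGens L k h), ∀ t < h,
      Pi.single L 1 + Pi.single k t ≠ x from fun hmem => this _ hmem t ht rfl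
  intro x hx
  induction hx using AddSubmonoid.closure_induction with
  | mem x hx =>
    intro t ht he
    rcases hx with (⟨j, hjL, rfl⟩ | hx) | ⟨j, hjL, hjk, rfl⟩
    · simpa [hkL.symm, hjL.symm] using congrFun he L
    · rcases hx with rfl | rfl | rfl
      · simpa [hkL.symm] using congrFun he L
      · simpa [hkL.symm] using congrFun he L
      · have := congrFun he k
        simp [hkL] at this
        omega
    · simpa [hjk.symm, hjL] using congrFun he j
  | zero => intro t _ he; simpa [hkL.symm] using congrFun he L
  | add a b _ _ iha ihb =>
    intro t ht he
    have hab : a L + b L = 1 := by simpa [hkL.symm] using (congrFun he L).symm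
    rcases Nat.add_eq_one_iff.mp hab with ⟨-, hbL⟩ | ⟨haL, -⟩
    · obtain ⟨hbk, hb⟩ := le_single_add_single hkL (le_add_self.trans_eq he.symm) hbL
      exact ihb _ (hbk.trans_lt ht) hb
    · obtain ⟨hak, ha⟩ := le_single_add_single hkL (le_self_add.trans_eq he.symm) haL
      exact iha _ (hak.trans_lt ht) ha

theorem notMem_closure_iff {x : Fin p → ℕ} :
    x ∉ AddSubmonoid.closure (semigroupGens L k h) ↔
      ∃ t < h, Pi.single L 1 + Pi.single k t = x := by
  refine ⟨fun hx => ?_, fun ⟨t, ht, hx⟩ => hx ▸ single_add_single_notMem_closure hkL ht⟩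
  by_contra! hne
  exact hx (mem_closure_of_forall_ne hkL hne)

theorem pos_of_notMem_closure {x : Fin p → ℕ}
    (hx : x ∉ AddSubmonoid.closure (semigroupGens L k h)) : 0 < h := by
  obtain ⟨t, ht, -⟩ := (notMem_closure_iff hkL).1 hx
  omega

theorem setOf_notMem_closure_eq_image :
    {x | x ∉ AddSubmonoid.closure (semigroupGens L k h)} =
      (fun t => Pi.single L 1 + Pi.single k t) '' Iio h := by
  ext x
  simp [notMem_closure_iff hkL]

theorem ncard_setOf_notMem_closure :
    {x | x ∉ AddSubmonoid.closure (semigroupGens L k h)}.ncard = h := by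
  have hinj : Function.Injective fun t => (Pi.single L 1 + Pi.single k t : Fin p → ℕ) :=
    fun _ _ he => Pi.single_injective k (add_left_cancel he)
  rw [setOf_notMem_closure_eq_image hkL, ncard_image_of_injective _ hinj, ncard_Iio_nat]

theorem single_mem_closure_iff {m : ℕ} (hh : 0 < h) :
    Pi.single L m ∈ AddSubmonoid.closure (semigroupGens L k h) ↔ m ≠ 1 := by
  refine ⟨?_, single_mem_closure_of_ne_one⟩
  rintro hm rfl
  exact single_add_single_notMem_closure hkL hh (by simpa using hm)

theorem three_le_ncard_minGens (hh : 0 < h) :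
    3 ≤ (minGens (AddSubmonoid.closure (semigroupGens L k h) : Set (Fin p → ℕ))).ncard := by
  have hk1 : IsMinGen (AddSubmonoid.closure (semigroupGens L k h) : Set (Fin p → ℕ))
      (Pi.single k 1) :=
    isMinGen_single (AddSubmonoid.subset_closure (Or.inl (Or.inl ⟨k, hkL, rfl⟩))) one_ne_zero
      fun a b _ _ hab => by omega
  have hL2 : IsMinGen (AddSubmonoid.closure (semigroupGens L k h) : Set (Fin p → ℕ))
      (Pi.single L 2) :=
    isMinGen_single ((single_mem_closure_iff hkL hh).2 (by omega)) two_ne_zero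
      fun a b ha _ hab => by have := (single_mem_closure_iff hkL hh).1 ha; omega
  have hL3 : IsMinGen (AddSubmonoid.closure (semigroupGens L k h) : Set (Fin p → ℕ))
      (Pi.single L 3) :=
    isMinGen_single ((single_mem_closure_iff hkL hh).2 (by omega)) three_ne_zero
      fun a b ha hb hab => by
        have := (single_mem_closure_iff hkL hh).1 ha
        have := (single_mem_closure_iff hkL hh).1 hb
        omega
  have hsub : {Pi.single k 1, Pi.single L 2, Pi.single L 3} ⊆
      minGens (AddSubmonoid.closure (semigroupGens L k h) : Set (Fin p → ℕ)) := by
    rintro _ (rfl | rfl | rfl)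
    exacts [hk1, hL2, hL3]
  refine le_of_eq_of_le ?_ (ncard_le_ncard hsub
    (semigroupGens_finite.subset (minGens_closure_subset _)))
  rw [eq_comm, ncard_eq_three]
  refine ⟨_, _, _, ?_, ?_, ?_, rfl⟩ <;> intro he <;> simpa [hkL] using congrFun he L

theorem le_ncard_setOf_mem_prec {prec : (Fin p → ℕ) → (Fin p → ℕ) → Prop}
    (hprec : IsMonomialOrder prec) {Fb : Fin p → ℕ}
    (hFb : Fb ∉ AddSubmonoid.closure (semigroupGens L k h) ∧
      ∀ x, x ∉ AddSubmonoid.closure (semigroupGens L k h) → x ≠ Fb → prec x Fb) :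
    h ≤ {x | x ∈ AddSubmonoid.closure (semigroupGens L k h) ∧ prec x Fb}.ncard := by
  have ⟨_, htrans, _, _, _, hfin⟩ := hprec
  have hh : 0 < h := pos_of_notMem_closure hkL hFb.1
  set top : Fin p → ℕ := Pi.single L 1 + Pi.single k (h - 1) with htop_def
  have htop : top = Fb ∨ prec top Fb := by
    by_cases he : top = Fb
    · exact Or.inl he
    · exact Or.inr (hFb.2 _ (single_add_single_notMem_closure hkL (by omega)) he)
  have hsub : Pi.single k '' Iio h ⊆
      {x | x ∈ AddSubmonoid.closure (semigroupGens L k h) ∧ prec x Fb} := by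
    rintro _ ⟨t, ht : t < h, rfl⟩
    refine ⟨mem_closure_of_apply_eq_zero (by simp [hkL.symm]), ?_⟩
    have hlt : prec (Pi.single k t) top := by
      refine hprec.prec_of_le_of_ne (fun j => ?_) fun he => ?_
      · by_cases hjk : j = k
        · subst hjk; simp [htop_def, hkL]; omega
        · simp [hjk]
      · simpa [htop_def, hkL.symm] using congrFun he L
    rcases htop with htop | htop
    · exact htop ▸ hlt
    · exact htrans _ _ _ hlt htop
  calc h = (Pi.single k '' Iio h).ncard := by
        rw [ncard_image_of_injective _ (Pi.single_injective k), ncard_Iio_nat]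
    _ ≤ _ := ncard_le_ncard hsub ((hfin Fb).subset fun x hx => hx.2)

end semigroupGens

theorem stmt10_general {p : ℕ} (hp : 2 ≤ p)
    (prec : (Fin p → ℕ) → (Fin p → ℕ) → Prop) (hprec : IsMonomialOrder prec)
    (h : ℕ) (k : Fin p) (hk : (k : ℕ) < p - 1)
    (Fb : Fin p → ℕ)
    (hFb : Fb ∉ AddSubmonoid.closure (gens9 p h hp k) ∧
      ∀ x : Fin p → ℕ, x ∉ AddSubmonoid.closure (gens9 p h hp k) → x ≠ Fb → prec x Fb) :
    {x : Fin p → ℕ | x ∉ AddSubmonoid.closure (gens9 p h hp k)}.Finite ∧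
    {x : Fin p → ℕ | x ∈ AddSubmonoid.closure (gens9 p h hp k) ∧ prec x Fb}.ncard
        + {x : Fin p → ℕ | x ∉ AddSubmonoid.closure (gens9 p h hp k)}.ncard + 1
      ≤ {x : Fin p → ℕ | x ∈ AddSubmonoid.closure (gens9 p h hp k) ∧ prec x Fb}.ncard
        * (minGens ((AddSubmonoid.closure (gens9 p h hp k) : AddSubmonoid (Fin p → ℕ)) :
            Set (Fin p → ℕ))).ncard := by
  have hkL : k ≠ ⟨p - 1, by omega⟩ := Fin.ne_of_lt hk
  rw [show gens9 p h hp k = semigroupGens ⟨p - 1, by omega⟩ k h from rfl] at hFb ⊢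
  have hh : 0 < h := pos_of_notMem_closure hkL hFb.1
  refine ⟨by rw [setOf_notMem_closure_eq_image hkL]; exact (finite_Iio h).image _, ?_⟩
  have hn := le_ncard_setOf_mem_prec hkL hprec hFb
  rw [ncard_setOf_notMem_closure hkL]
  calc _ ≤ {x | x ∈ AddSubmonoid.closure (semigroupGens ⟨p - 1, by omega⟩ k h) ∧
        prec x Fb}.ncard * 3 := by omega
    _ ≤ _ := Nat.mul_le_mul_left _ (three_le_ncard_minGens hkL hh)

theorem stmt10 {p : ℕ} (hp : 2 ≤ p)
    (prec : (Fin p → ℕ) → (Fin p → ℕ) → Prop) (hprec : IsMonomialOrder prec)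
    (h : ℕ) (hh : 1 < h) (k : Fin p) (hk : (k : ℕ) < p - 1)
    (Fb : Fin p → ℕ)
    (hFb : Fb ∉ AddSubmonoid.closure (gens9 p h hp k) ∧
      ∀ x : Fin p → ℕ, x ∉ AddSubmonoid.closure (gens9 p h hp k) → x ≠ Fb → prec x Fb) :
    {x : Fin p → ℕ | x ∉ AddSubmonoid.closure (gens9 p h hp k)}.Finite ∧
    {x : Fin p → ℕ | x ∈ AddSubmonoid.closure (gens9 p h hp k) ∧ prec x Fb}.ncard
        + {x : Fin p → ℕ | x ∉ AddSubmonoid.closure (gens9 p h hp k)}.ncard + 1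
      ≤ {x : Fin p → ℕ | x ∈ AddSubmonoid.closure (gens9 p h hp k) ∧ prec x Fb}.ncard
        * (minGens ((AddSubmonoid.closure (gens9 p h hp k) : AddSubmonoid (Fin p → ℕ)) :
            Set (Fin p → ℕ))).ncard :=
  stmt10_general hp prec hprec h k hk Fb hFb
end

section
/- Let p ≥ 2, let q be a positive integer, let j ∈ {1, …, p}, and let S = ℕ^p \ {e_j, 2e_j, …, (q−1)e_j}. Then S is an ℕ^p-semigroup whose minimal generating set is {m·e_j : q ≤ m ≤ 2q−1} ∪ {e_i : i ∈ {1, …, p}, i ≠ j} ∪ {e_i + m·e_j : i ∈ {1, …, p}, i ≠ j, 1 ≤ m ≤ q−1}; in particular e(S) = pq. -/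
/-- The semigroup $ℕ^p \setminus \{e_j, 2e_j, …, (q-1)e_j\}$. -/
def S12 (p q : ℕ) (j : Fin p) : Set (Fin p → ℕ) :=
  {x | ¬ ∃ m : ℕ, 1 ≤ m ∧ m ≤ q - 1 ∧ x = m • Pi.single j 1}

lemma smul_single12 {p : ℕ} (j : Fin p) (m : ℕ) :
    m • (Pi.single j 1 : Fin p → ℕ) = Pi.single j m := by
  ext k
  simp [Pi.single_apply]

lemma notmem_S12 {p q : ℕ} (j : Fin p) (x : Fin p → ℕ) :
    x ∉ S12 p q j ↔ (1 ≤ x j ∧ x j ≤ q - 1 ∧ ∀ k, k ≠ j → x k = 0) := by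
  rw [S12]
  simp only [Set.mem_setOf_eq, not_not, smul_single12]
  constructor
  · rintro ⟨m, hm1, hm2, rfl⟩
    refine ⟨by simpa using hm1, by simpa using hm2, fun k hk => ?_⟩
    simp [Pi.single_apply, hk]
  · rintro ⟨h1, h2, h3⟩
    refine ⟨x j, h1, h2, funext fun k => ?_⟩
    rcases eq_or_ne k j with rfl | hk
    · simp
    · simp [Pi.single_apply, hk, h3 k hk]

lemma mem_S12 {p q : ℕ} (j : Fin p) (x : Fin p → ℕ) :
    x ∈ S12 p q j ↔ ¬(1 ≤ x j ∧ x j ≤ q - 1 ∧ ∀ k, k ≠ j → x k = 0) := by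
  rw [← notmem_S12]; exact not_not.symm

/-- The parametrization of the minimal generators. -/
def gen12 (p q : ℕ) (j : Fin p) : Fin p × Fin q → (Fin p → ℕ) := fun z =>
  if z.1 = j then Pi.single j (q + (z.2 : ℕ))
  else Pi.single z.1 1 + Pi.single j (z.2 : ℕ)

lemma gen12_inj {p q : ℕ} (j : Fin p) : Function.Injective (gen12 p q j) := by
  rintro ⟨i, m⟩ ⟨i', m'⟩ h
  simp only [gen12] at h
  by_cases hi : i = j <;> by_cases hi' : i' = j
  · rw [if_pos hi, if_pos hi'] at h
    have hj := congrFun h j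
    simp at hj
    simp only [Prod.mk.injEq]
    exact ⟨hi.trans hi'.symm, Fin.ext (by omega)⟩
  · rw [if_pos hi, if_neg hi'] at h
    have hj := congrFun h j
    simp [Pi.single_apply, Ne.symm hi'] at hj
    exact absurd hj (by have := m'.isLt; omega)
  · rw [if_neg hi, if_pos hi'] at h
    have hj := congrFun h j
    simp [Pi.single_apply, Ne.symm hi] at hj
    exact absurd hj (by have := m.isLt; omega)
  · rw [if_neg hi, if_neg hi'] at h
    have h1 : (m : ℕ) = (m' : ℕ) := by
      simpa [Pi.single_apply, Ne.symm hi, Ne.symm hi'] using congrFun h j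
    have h2 : i = i' := by
      by_contra hne
      have hii := congrFun h i
      simp [Pi.single_apply, hi, hne] at hii
    simp only [Prod.mk.injEq]
    exact ⟨h2, Fin.ext h1⟩

theorem stmt12 {p q : ℕ} (hp : 2 ≤ p) (hq : 1 ≤ q) (j : Fin p) :
    IsSubmonoidSet (S12 p q j) ∧
    {x : Fin p → ℕ | x ∉ S12 p q j}.Finite ∧
    minGens (S12 p q j) =
      ({x | ∃ m : ℕ, q ≤ m ∧ m ≤ 2 * q - 1 ∧ x = m • Pi.single j 1}
          ∪ {x | ∃ i : Fin p, i ≠ j ∧ x = Pi.single i 1})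
        ∪ {x | ∃ (i : Fin p) (m : ℕ), i ≠ j ∧ 1 ≤ m ∧ m ≤ q - 1 ∧
            x = Pi.single i 1 + m • Pi.single j 1} ∧
    (minGens (S12 p q j)).ncard = p * q := by
  have hsub : IsSubmonoidSet (S12 p q j) := by
    constructor
    · rw [mem_S12]; simp
    · intro x hx y hy
      rw [mem_S12]
      rintro ⟨h1, h2, h3⟩
      rw [mem_S12] at hx hy
      simp only [Pi.add_apply] at h1 h2 h3
      have hx3 : ∀ k, k ≠ j → x k = 0 := fun k hk => by have := h3 k hk; omega
      have hy3 : ∀ k, k ≠ j → y k = 0 := fun k hk => by have := h3 k hk; omega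
      have hxj : x j = 0 ∨ q - 1 < x j := by
        by_contra hc; push_neg at hc; exact hx ⟨by omega, by omega, hx3⟩
      have hyj : y j = 0 ∨ q - 1 < y j := by
        by_contra hc; push_neg at hc; exact hy ⟨by omega, by omega, hy3⟩
      omega
  have hfin : {x : Fin p → ℕ | x ∉ S12 p q j}.Finite := by
    apply Set.Finite.subset (((Set.finite_Icc 1 (q-1)).image
      (fun m => (Pi.single j m : Fin p → ℕ))))
    intro x hx
    rw [Set.mem_setOf_eq, notmem_S12] at hx
    exact ⟨x j, ⟨hx.1, hx.2.1⟩, (funext fun k => by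
      rcases eq_or_ne k j with rfl | hk
      · simp
      · simp [Pi.single_apply, hk, hx.2.2 k hk]).symm⟩
  have hset : minGens (S12 p q j) =
      ({x | ∃ m : ℕ, q ≤ m ∧ m ≤ 2 * q - 1 ∧ x = m • Pi.single j 1}
          ∪ {x | ∃ i : Fin p, i ≠ j ∧ x = Pi.single i 1})
        ∪ {x | ∃ (i : Fin p) (m : ℕ), i ≠ j ∧ 1 ≤ m ∧ m ≤ q - 1 ∧
            x = Pi.single i 1 + m • Pi.single j 1} := by
    ext x
    simp only [minGens, IsMinGen, Set.mem_setOf_eq, Set.mem_union, smul_single12]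
    constructor
    · rintro ⟨hxS, hx0, hmin⟩
      by_cases hsupp : ∀ k, k ≠ j → x k = 0
      · -- x is a multiple of e_j
        have hxe : x = Pi.single j (x j) := funext fun k => by
          rcases eq_or_ne k j with rfl | hk
          · simp
          · simp [Pi.single_apply, hk, hsupp k hk]
        have hxj1 : 1 ≤ x j := by
          rcases Nat.eq_zero_or_pos (x j) with h | h
          · exact absurd (funext fun k => by
              rcases eq_or_ne k j with rfl | hk
              · exact h
              · exact hsupp k hk) hx0
          · exact h
        have hxq : q ≤ x j := by
          rw [mem_S12] at hxS
          by_contra hc; push_neg at hc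
          exact hxS ⟨hxj1, by omega, hsupp⟩
        have hx2q : x j ≤ 2 * q - 1 := by
          by_contra hc; push_neg at hc
          refine hmin (Pi.single j q) ?_ (Pi.single j (x j - q)) ?_ ?_ ?_ ?_
          · rw [mem_S12]; rintro ⟨_, h2, _⟩; simp at h2; omega
          · rw [mem_S12]; rintro ⟨_, h2, _⟩; simp at h2; omega
          · intro h; have := congrFun h j; simp at this; omega
          · intro h; have := congrFun h j; simp at this; omega
          · funext k
            rcases eq_or_ne k j with rfl | hk
            · simp; omega
            · simp [Pi.single_apply, hk, hsupp k hk]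
        exact Or.inl (Or.inl ⟨x j, hxq, hx2q, hxe⟩)
      · push_neg at hsupp
        obtain ⟨i, hij, hxi⟩ := hsupp
        set y : Fin p → ℕ := fun k => if k = i then x i - 1 else x k with hy
        have hxy : x = Pi.single i 1 + y := funext fun k => by
          rcases eq_or_ne k i with rfl | hk
          · simp [hy]; omega
          · simp [hy, Pi.single_apply, hk]
        by_cases hy0 : y = 0
        · refine Or.inl (Or.inr ⟨i, hij, ?_⟩)
          rw [hxy, hy0, add_zero]
        by_cases hyS : y ∈ S12 p q j
        · exact absurd hxy.symm
            (hmin (Pi.single i 1) (by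
              rw [mem_S12]; rintro ⟨_, _, h3⟩
              have := h3 i hij; simp at this) y hyS
              (by intro h; have := congrFun h i; simp at this) hy0)
        · rw [notmem_S12] at hyS
          obtain ⟨h1, h2, h3⟩ := hyS
          have hyj : y j = x j := by simp [hy, Ne.symm hij]
          refine Or.inr ⟨i, x j, hij, by omega, by omega, ?_⟩
          have hyej : y = Pi.single j (x j) := funext fun k => by
            rcases eq_or_ne k j with rfl | hk
            · simp [hyj]
            · simp [Pi.single_apply, hk, h3 k hk]
          exact hxy.trans (by rw [hyej])
    · rintro ((⟨m, hm1, hm2, rfl⟩ | ⟨i, hij, rfl⟩) | ⟨i, m, hij, hm1, hm2, rfl⟩)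
      · refine ⟨by rw [mem_S12]; rintro ⟨_, h2, _⟩; simp at h2; omega,
          by intro h; have := congrFun h j; simp at this; omega, ?_⟩
        intro a ha b hb ha0 hb0 heq
        have hcoord : ∀ k, k ≠ j → a k = 0 ∧ b k = 0 := fun k hk => by
          have := congrFun heq k
          simp [Pi.single_apply, hk] at this
          omega
        have haj : 1 ≤ a j := by
          rcases Nat.eq_zero_or_pos (a j) with h | h
          · exact absurd (funext fun k => by
              rcases eq_or_ne k j with rfl | hk
              · exact h
              · exact (hcoord k hk).1) ha0
          · exact h
        have hbj : 1 ≤ b j := by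
          rcases Nat.eq_zero_or_pos (b j) with h | h
          · exact absurd (funext fun k => by
              rcases eq_or_ne k j with rfl | hk
              · exact h
              · exact (hcoord k hk).2) hb0
          · exact h
        rw [mem_S12] at ha hb
        have haq : q ≤ a j := by
          by_contra hc; push_neg at hc
          exact ha ⟨haj, by omega, fun k hk => (hcoord k hk).1⟩
        have hbq : q ≤ b j := by
          by_contra hc; push_neg at hc
          exact hb ⟨hbj, by omega, fun k hk => (hcoord k hk).2⟩
        have := congrFun heq j
        simp at this
        omega
      · refine ⟨by rw [mem_S12]; rintro ⟨_, _, h3⟩; have := h3 i hij; simp at this,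
          by intro h; have := congrFun h i; simp at this, ?_⟩
        intro a ha b hb ha0 hb0 heq
        have hcoord : ∀ k, k ≠ i → a k = 0 ∧ b k = 0 := fun k hk => by
          have := congrFun heq k
          simp [Pi.single_apply, hk] at this
          omega
        have hi := congrFun heq i
        simp at hi
        have ha1 : 1 ≤ a i := by
          rcases Nat.eq_zero_or_pos (a i) with h | h
          · exact absurd (funext fun k => by
              rcases eq_or_ne k i with rfl | hk
              · exact h
              · exact (hcoord k hk).1) ha0
          · exact h
        have hb1 : 1 ≤ b i := by
          rcases Nat.eq_zero_or_pos (b i) with h | h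
          · exact absurd (funext fun k => by
              rcases eq_or_ne k i with rfl | hk
              · exact h
              · exact (hcoord k hk).2) hb0
          · exact h
        omega
      · have hxi : (Pi.single i 1 + Pi.single j m : Fin p → ℕ) i = 1 := by
          simp [Pi.single_apply, hij]
        have hxj : (Pi.single i 1 + Pi.single j m : Fin p → ℕ) j = m := by
          simp [Pi.single_apply, Ne.symm hij]
        have hxk : ∀ k, k ≠ i → k ≠ j →
            (Pi.single i 1 + Pi.single j m : Fin p → ℕ) k = 0 := fun k hki hkj => by
          simp [Pi.single_apply, hki, hkj]
        refine ⟨by rw [mem_S12]; rintro ⟨_, _, h3⟩; have := h3 i hij; omega,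
          by intro h; have := congrFun h i; rw [hxi] at this; simp at this, ?_⟩
        intro a ha b hb ha0 hb0 heq
        have hsum : ∀ k, a k + b k = (Pi.single i 1 + Pi.single j m : Fin p → ℕ) k :=
          fun k => congrFun heq k
        have key : ∀ c : Fin p → ℕ, c ∈ S12 p q j → c ≠ 0 →
            (∀ k, c k ≤ (Pi.single i 1 + Pi.single j m : Fin p → ℕ) k) →
            c i = 0 → False := by
          intro c hc hc0 hle hci
          have h3 : ∀ k, k ≠ j → c k = 0 := fun k hk => by
            rcases eq_or_ne k i with rfl | hki
            · exact hci
            · have := hle k; rw [hxk k hki hk] at this; omega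
          have hcj : 1 ≤ c j := by
            rcases Nat.eq_zero_or_pos (c j) with h | h
            · exact absurd (funext fun k => by
                rcases eq_or_ne k j with rfl | hk
                · exact h
                · exact h3 k hk) hc0
            · exact h
          have hcjm : c j ≤ m := by have := hle j; omega
          rw [mem_S12] at hc
          exact hc ⟨hcj, by omega, h3⟩
        have hale : ∀ k, a k ≤ (Pi.single i 1 + Pi.single j m : Fin p → ℕ) k :=
          fun k => by have := hsum k; omega
        have hble : ∀ k, b k ≤ (Pi.single i 1 + Pi.single j m : Fin p → ℕ) k :=
          fun k => by have := hsum k; omega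
        have hi' := hsum i
        rw [hxi] at hi'
        rcases Nat.eq_zero_or_pos (a i) with h | h
        · exact key a ha ha0 hale h
        · exact key b hb hb0 hble (by omega)
  refine ⟨hsub, hfin, hset, ?_⟩
  have hrange : minGens (S12 p q j) = Set.range (gen12 p q j) := by
    rw [hset]
    ext x
    simp only [Set.mem_union, Set.mem_setOf_eq, Set.mem_range, smul_single12]
    constructor
    · rintro ((⟨m, hm1, hm2, rfl⟩ | ⟨i, hij, rfl⟩) | ⟨i, m, hij, hm1, hm2, rfl⟩)
      · exact ⟨⟨j, ⟨m - q, by omega⟩⟩, by simp [gen12]; congr 1; omega⟩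
      · exact ⟨⟨i, ⟨0, by omega⟩⟩, by simp [gen12, hij]⟩
      · exact ⟨⟨i, ⟨m, by omega⟩⟩, by simp [gen12, hij]⟩
    · rintro ⟨⟨i, m⟩, rfl⟩
      by_cases hij : i = j
      · exact Or.inl (Or.inl ⟨q + (m : ℕ), by omega,
          by have := m.isLt; omega, by simp [gen12, hij]⟩)
      · rcases Nat.eq_zero_or_pos (m : ℕ) with h | h
        · exact Or.inl (Or.inr ⟨i, hij, by simp [gen12, hij, h]⟩)
        · exact Or.inr ⟨i, (m : ℕ), hij, h, by have := m.isLt; omega,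
            by simp [gen12, hij]⟩
  rw [hrange, ← Set.image_univ, Set.ncard_image_of_injective _ (gen12_inj j),
    Set.ncard_univ]
  simp
end

section
/- Fix a monomial order ≺ on ℕ^p whose initial segments are finite. Let p ≥ 2, let q be a positive integer, let j ∈ {1, …, p}, and let S = ℕ^p \ {e_j, 2e_j, …, (q−1)e_j}. Then S is an ℕ^p-semigroup satisfying the extended Wilf conjecture: n(S)·e(S) ≥ N(Fb(S)) + 1. -/
/-!
The gaps of `S12 p q j` are the `q - 1` points `m • e_j`, `1 ≤ m < q`, so the genus is at most
`q - 1`, while `0 ≺ Fb` gives `n ≥ 1`. On the other hand every `e_i` with `i ≠ j` and every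
`m • e_j` with `q ≤ m < 2q` is a minimal generator (the nonzero elements of `S12` on the `j`-axis
are the `m • e_j` with `m ≥ q`), so `e ≥ q + 1` and `n · e ≥ n + q ≥ n + g + 1`.
-/

lemma IsMinGen.eq_zero_or_eq_of_le {p : ℕ} {S : Set (Fin p → ℕ)} {x a : Fin p → ℕ}
    (hx : IsMinGen S x) (ha : a ∈ S) (hxa : x - a ∈ S) (hle : a ≤ x) : a = 0 ∨ a = x := by
  by_contra! h
  refine hx.2.2 a ha (x - a) hxa h.1 (fun h0 => h.2 (le_antisymm hle (tsub_eq_zero_iff_le.mp h0))) ?_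
  exact add_tsub_cancel_of_le hle

lemma isMinGen_single_one {p : ℕ} {S : Set (Fin p → ℕ)} {i : Fin p}
    (hi : Pi.single i 1 ∈ S) : IsMinGen S (Pi.single i 1) := by
  refine ⟨hi, by simp, fun a _ b _ ha hb hab => ?_⟩
  obtain ⟨k, hk⟩ := Function.ne_iff.mp ha
  obtain ⟨l, hl⟩ := Function.ne_iff.mp hb
  have hk' := congrFun hab k
  have hl' := congrFun hab l
  have hi' := congrFun hab i
  simp only [Pi.add_apply, Pi.single_apply, Pi.zero_apply] at hk hl hk' hl' hi'
  split_ifs at hk' hl' hi' <;> subst_vars <;> omega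

lemma IsMonomialOrder.ncard_pos_of_notMem {p : ℕ} {prec : (Fin p → ℕ) → (Fin p → ℕ) → Prop}
    (hprec : IsMonomialOrder prec) {S : Set (Fin p → ℕ)} (h0 : 0 ∈ S) {F : Fin p → ℕ}
    (hF : F ∉ S) : 0 < {x | x ∈ S ∧ prec x F}.ncard :=
  (Set.ncard_pos ((hprec.2.2.2.2.2 F).subset fun _ hx => hx.2)).mpr
    ⟨0, h0, hprec.2.2.2.2.1 F fun hF0 => hF (hF0 ▸ h0)⟩

namespace S12

variable {p q : ℕ} {j : Fin p}

lemma mem_iff {x : Fin p → ℕ} : x ∈ S12 p q j ↔ x j = 0 ∨ q ≤ x j ∨ ∃ i ≠ j, x i ≠ 0 := by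
  simp only [S12, Set.mem_ofPred_eq]
  constructor
  · intro h
    by_contra! hc
    exact h ⟨x j, by omega, by omega, funext fun i => by by_cases hi : i = j <;> simp_all⟩
  · rintro h ⟨m, hm1, hm2, rfl⟩
    simp only [Pi.smul_apply, Pi.single_eq_same, smul_eq_mul, mul_one] at h
    obtain h | h | ⟨i, hi, h⟩ := h
    · omega
    · omega
    · simp [Pi.single_eq_of_ne hi] at h

lemma mem_of_le_apply {x : Fin p → ℕ} {i : Fin p} (h : q ≤ x i) : x ∈ S12 p q j := by
  rcases eq_or_ne i j with rfl | hi
  · exact mem_iff.mpr (Or.inr (Or.inl h))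
  · rcases Nat.eq_zero_or_pos q with rfl | hq
    · exact mem_iff.mpr (Or.inr (Or.inl (Nat.zero_le _)))
    · exact mem_iff.mpr (Or.inr (Or.inr ⟨i, hi, by omega⟩))

lemma le_apply_of_mem {x : Fin p → ℕ} (hx : x ∈ S12 p q j) (hx0 : x ≠ 0)
    (hoff : ∀ i ≠ j, x i = 0) : q ≤ x j := by
  obtain h | h | ⟨i, hi, h⟩ := mem_iff.mp hx
  · exact absurd (funext fun i => by by_cases hi : i = j <;> simp_all) hx0
  · exact h
  · exact absurd (hoff i hi) h

lemma isSubmonoidSet : IsSubmonoidSet (S12 p q j) := by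
  refine ⟨mem_iff.mpr (Or.inl rfl), fun x hx y hy => ?_⟩
  by_cases hoff : ∃ i ≠ j, (x + y) i ≠ 0
  · exact mem_iff.mpr (Or.inr (Or.inr hoff))
  push Not at hoff
  rcases eq_or_ne x 0 with rfl | hx0
  · simpa using hy
  · have hxj := le_apply_of_mem hx hx0 fun i hi => (Nat.add_eq_zero_iff.mp (hoff i hi)).1
    exact mem_of_le_apply (i := j) (hxj.trans (Nat.le_add_right _ _))

lemma setOf_notMem_eq_image :
    {x | x ∉ S12 p q j} = (fun m : ℕ => m • Pi.single j 1) '' Set.Icc 1 (q - 1) := by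
  ext x
  simp [S12, eq_comm, and_assoc]

lemma isMinGen_nsmul_single {m : ℕ} (hqm : q ≤ m) (hm : m < 2 * q) :
    IsMinGen (S12 p q j) (m • Pi.single j 1) := by
  refine ⟨mem_of_le_apply (i := j) (by simpa using hqm), fun h => ?_, fun a ha b hb ha0 hb0 hab => ?_⟩
  · have := congrFun h j
    simp at this
    omega
  · have hoff : ∀ i ≠ j, a i + b i = 0 := fun i hi => by
      simpa [Pi.single_eq_of_ne hi] using congrFun hab i
    have haj := le_apply_of_mem ha ha0 fun i hi => (Nat.add_eq_zero_iff.mp (hoff i hi)).1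
    have hbj := le_apply_of_mem hb hb0 fun i hi => (Nat.add_eq_zero_iff.mp (hoff i hi)).2
    have := congrFun hab j
    simp at this
    omega

lemma minGens_subset_Iic (hq : 1 ≤ q) :
    minGens (S12 p q j) ⊆ Set.Iic (fun _ => 2 * q) := by
  intro x hx i
  change x i ≤ 2 * q
  -- if `2q < x i`, then `x = q • e_i + (x - q • e_i)` splits `x` inside `S12`
  by_contra! hi
  have hai : (q • Pi.single i 1 : Fin p → ℕ) i = q := by simp
  have hle : q • Pi.single i 1 ≤ x := fun k => by
    rcases eq_or_ne k i with rfl | hk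
    · simp only [hai]; omega
    · simp [Pi.single_eq_of_ne hk]
  obtain h | h := IsMinGen.eq_zero_or_eq_of_le hx (mem_of_le_apply hai.ge)
    (mem_of_le_apply (i := i) (by simp only [Pi.sub_apply, hai]; omega)) hle
  · have := congrFun h i
    simp only [hai, Pi.zero_apply] at this
    omega
  · have := congrFun h i
    omega

lemma add_one_le_ncard_minGens (hp : 2 ≤ p) (hq : 1 ≤ q) :
    q + 1 ≤ (minGens (S12 p q j)).ncard := by
  obtain ⟨i, hi⟩ := Fintype.exists_ne_of_one_lt_card (by rw [Fintype.card_fin]; omega) j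
  set axis := (fun m : ℕ => m • Pi.single j 1 : ℕ → Fin p → ℕ) '' Set.Ico q (2 * q)
  have hsub : insert (Pi.single i 1) axis ⊆ minGens (S12 p q j) := by
    rintro x (rfl | ⟨m, ⟨hqm, hm⟩, rfl⟩)
    · exact isMinGen_single_one (mem_iff.mpr (Or.inr (Or.inr ⟨i, hi, by simp⟩)))
    · exact isMinGen_nsmul_single hqm hm
  have hnotMem : Pi.single i 1 ∉ axis := by
    rintro ⟨m, -, h⟩
    simpa [Pi.single_eq_of_ne hi] using congrFun h i
  have haxis : axis.ncard = q := by
    rw [Set.ncard_image_of_injective _ fun m n h => by simpa using congrFun h j,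
      Set.ncard_Ico_nat]
    omega
  calc q + 1 = (insert (Pi.single i 1) axis).ncard := by
        rw [Set.ncard_insert_of_notMem hnotMem (Set.toFinite axis), haxis]
    _ ≤ _ := Set.ncard_le_ncard hsub ((Set.finite_Iic _).subset (minGens_subset_Iic hq))

lemma finite_setOf_notMem : {x | x ∉ S12 p q j}.Finite :=
  setOf_notMem_eq_image ▸ (Set.finite_Icc _ _).image _

lemma ncard_setOf_notMem_le : {x | x ∉ S12 p q j}.ncard ≤ q - 1 := by
  rw [setOf_notMem_eq_image]
  exact (Set.ncard_image_le (Set.finite_Icc _ _)).trans (by simp)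

end S12

theorem stmt13_general {p q : ℕ} (hp : 2 ≤ p) (j : Fin p)
    (prec : (Fin p → ℕ) → (Fin p → ℕ) → Prop) (hprec : IsMonomialOrder prec)
    (Fb : Fin p → ℕ)
    (hFb : Fb ∉ S12 p q j ∧
      ∀ x : Fin p → ℕ, x ∉ S12 p q j → x ≠ Fb → prec x Fb) :
    IsSubmonoidSet (S12 p q j) ∧
    {x : Fin p → ℕ | x ∉ S12 p q j}.Finite ∧
    {x : Fin p → ℕ | x ∈ S12 p q j ∧ prec x Fb}.ncard
        + {x : Fin p → ℕ | x ∉ S12 p q j}.ncard + 1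
      ≤ {x : Fin p → ℕ | x ∈ S12 p q j ∧ prec x Fb}.ncard
        * (minGens (S12 p q j)).ncard := by
  have hq : 2 ≤ q := by
    obtain ⟨m, hm1, hm2, -⟩ := not_not.mp hFb.1
    omega
  refine ⟨S12.isSubmonoidSet, S12.finite_setOf_notMem, ?_⟩
  set n := {x | x ∈ S12 p q j ∧ prec x Fb}.ncard
  have hn : 0 < n := hprec.ncard_pos_of_notMem S12.isSubmonoidSet.1 hFb.1
  have hg : {x | x ∉ S12 p q j}.ncard ≤ q - 1 := S12.ncard_setOf_notMem_le
  have he : q + 1 ≤ (minGens (S12 p q j)).ncard := S12.add_one_le_ncard_minGens hp (by omega)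
  have hnq : q ≤ n * q := Nat.le_mul_of_pos_left q hn
  calc n + {x | x ∉ S12 p q j}.ncard + 1 ≤ n * (q + 1) := by rw [Nat.mul_succ]; omega
    _ ≤ n * (minGens (S12 p q j)).ncard := Nat.mul_le_mul_left n he

theorem stmt13 {p q : ℕ} (hp : 2 ≤ p) (hq : 1 ≤ q) (j : Fin p)
    (prec : (Fin p → ℕ) → (Fin p → ℕ) → Prop) (hprec : IsMonomialOrder prec)
    (Fb : Fin p → ℕ)
    (hFb : Fb ∉ S12 p q j ∧
      ∀ x : Fin p → ℕ, x ∉ S12 p q j → x ≠ Fb → prec x Fb) :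
    IsSubmonoidSet (S12 p q j) ∧
    {x : Fin p → ℕ | x ∉ S12 p q j}.Finite ∧
    {x : Fin p → ℕ | x ∈ S12 p q j ∧ prec x Fb}.ncard
        + {x : Fin p → ℕ | x ∉ S12 p q j}.ncard + 1
      ≤ {x : Fin p → ℕ | x ∈ S12 p q j ∧ prec x Fb}.ncard
        * (minGens (S12 p q j)).ncard :=
  stmt13_general hp j prec hprec Fb hFb
end

section
/- Let a and b be nonnegative integers with a < b, let C ∩ ℕ² = {(x, y) ∈ ℕ² : y ≤ x} be the integer points of the cone of ℚ₊² generated by (1,0) and (1,1), and let S = {k·(1,1) : k ∈ ℕ} ∪ {(x, y) ∈ ℕ² : y ≤ x and (x > b or y > a)}. Then S is a C-semigroup whose minimal generating set is {(1,1)} ∪ {(i, 0) : b+1 ≤ i ≤ 2b+1} ∪ {(b+1, i) : 1 ≤ i ≤ a} ∪ {(i, a+1) : a+2 ≤ i ≤ b+1}; in particular e(S) = 2b + 2, and its genus is g(S) = (1 + a)(2b − a)/2. -/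
/-- The semigroup $S = ⟨(1,1)⟩ ∪ (C \setminus [0,b]×[0,a])$ where $C$ is the cone
generated by $(1,0)$ and $(1,1)$. -/
def S18 (a b : ℕ) : Set (Fin 2 → ℕ) :=
  {v | (∃ k : ℕ, v = k • ![1, 1]) ∨ (v 1 ≤ v 0 ∧ (b < v 0 ∨ a < v 1))}

/-- The set of gaps of `S18 a b`: integer points of the cone not in the semigroup. -/
def H18 (a b : ℕ) : Set (Fin 2 → ℕ) :=
  {v | v 1 ≤ v 0 ∧ v ∉ S18 a b}

/-! ### Auxiliary machinery -/

/-- Coordinate description of membership in `S18`. -/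
def Pp (a b x y : ℕ) : Prop := y ≤ x ∧ (x = y ∨ b < x ∨ a < y)

/-- Coordinate description of the claimed minimal generating set. -/
def Gp (a b x y : ℕ) : Prop :=
  (x = 1 ∧ y = 1) ∨ (b + 1 ≤ x ∧ x ≤ 2 * b + 1 ∧ y = 0) ∨
  (x = b + 1 ∧ 1 ≤ y ∧ y ≤ a) ∨ (a + 2 ≤ x ∧ x ≤ b + 1 ∧ y = a + 1)

lemma vec_eq_iff (v : Fin 2 → ℕ) (m n : ℕ) : v = ![m, n] ↔ v 0 = m ∧ v 1 = n := by
  constructor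
  · rintro rfl; simp
  · rintro ⟨h0, h1⟩; funext i; fin_cases i <;> simpa

lemma vec_ext_iff (v w : Fin 2 → ℕ) : v = w ↔ v 0 = w 0 ∧ v 1 = w 1 := by
  constructor
  · rintro rfl; exact ⟨rfl, rfl⟩
  · rintro ⟨h0, h1⟩; funext i; fin_cases i <;> assumption

lemma mem_S18_iff (a b : ℕ) (v : Fin 2 → ℕ) : v ∈ S18 a b ↔ Pp a b (v 0) (v 1) := by
  unfold S18 Pp
  simp only [Set.mem_setOf_eq]
  constructor
  · rintro (⟨k, rfl⟩ | ⟨h1, h2⟩)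
    · simp
    · exact ⟨h1, Or.inr h2⟩
  · rintro ⟨h1, (he | h2)⟩
    · exact Or.inl ⟨v 0, by funext i; fin_cases i <;> simp <;> omega⟩
    · exact Or.inr ⟨h1, h2⟩

lemma ne_zero_iff' (v : Fin 2 → ℕ) : v ≠ 0 ↔ ¬(v 0 = 0 ∧ v 1 = 0) := by
  rw [not_iff_not]
  constructor
  · rintro rfl; simp
  · rintro ⟨h0, h1⟩; funext i; fin_cases i <;> simpa

lemma mingen_iff (a b : ℕ) (hab : a < b) (v : Fin 2 → ℕ) :
    IsMinGen (S18 a b) v ↔ Gp a b (v 0) (v 1) := by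
  constructor
  · rintro ⟨hs, hnz, hmin⟩
    rw [mem_S18_iff] at hs
    rw [ne_zero_iff'] at hnz
    obtain ⟨hyx, hc⟩ := hs
    by_contra hG
    unfold Gp at hG
    set x := v 0 with hx
    set y := v 1 with hy
    have key : ∀ x1 y1 x2 y2 : ℕ, Pp a b x1 y1 → Pp a b x2 y2 →
        ¬(x1 = 0 ∧ y1 = 0) → ¬(x2 = 0 ∧ y2 = 0) → ¬(x1 + x2 = x ∧ y1 + y2 = y) := by
      rintro x1 y1 x2 y2 h1 h2 n1 n2 ⟨e1, e2⟩
      refine hmin ![x1, y1] ?_ ![x2, y2] ?_ ?_ ?_ ?_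
      · rw [mem_S18_iff]; simpa using h1
      · rw [mem_S18_iff]; simpa using h2
      · rw [ne_zero_iff']; simpa using n1
      · rw [ne_zero_iff']; simpa using n2
      · funext i; fin_cases i <;> simp <;> omega
    have hsplit : (x = y ∧ 2 ≤ x) ∨ (y = 0 ∧ 2 * b + 2 ≤ x) ∨
        (1 ≤ y ∧ y ≤ a ∧ b + 2 ≤ x) ∨ (a + 2 ≤ y ∧ y < x) ∨
        (y = a + 1 ∧ b + 2 ≤ x ∧ x ≤ a + b + 1) ∨ (y = a + 1 ∧ a + b + 2 ≤ x) := by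
      omega
    unfold Pp at key
    rcases hsplit with h | h | h | h | h | h
    · exact key 1 1 (x - 1) (y - 1) (by omega) (by omega) (by omega) (by omega) (by omega)
    · exact key (b + 1) 0 (x - b - 1) 0 (by omega) (by omega) (by omega) (by omega) (by omega)
    · exact key 1 1 (x - 1) (y - 1) (by omega) (by omega) (by omega) (by omega) (by omega)
    · exact key 1 1 (x - 1) (y - 1) (by omega) (by omega) (by omega) (by omega) (by omega)
    · exact key (x - b - 1) (x - b - 1) (b + 1) (y - (x - b - 1)) (by omega) (by omega)
        (by omega) (by omega) (by omega)
    · exact key (a + 1) (a + 1) (x - a - 1) 0 (by omega) (by omega) (by omega) (by omega)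
        (by omega)
  · intro hG
    refine ⟨?_, ?_, ?_⟩
    · rw [mem_S18_iff]; unfold Gp at hG; unfold Pp; omega
    · rw [ne_zero_iff']; unfold Gp at hG; omega
    · intro u hu w hw hun hwn hne
      rw [mem_S18_iff] at hu hw
      rw [ne_zero_iff'] at hun hwn
      have h0 : u 0 + w 0 = v 0 := by rw [← hne]; simp
      have h1 : u 1 + w 1 = v 1 := by rw [← hne]; simp
      unfold Pp at hu hw
      unfold Gp at hG
      omega

/-- The gaps as a concrete finset. -/
def Hfin (a b : ℕ) : Finset (Fin 2 → ℕ) :=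
  (Finset.range (a + 1)).biUnion (fun y => (Finset.Ioc y b).image (fun x => ![x, y]))

lemma mem_H18_iff (a b : ℕ) (v : Fin 2 → ℕ) :
    v ∈ H18 a b ↔ v 1 < v 0 ∧ v 0 ≤ b ∧ v 1 ≤ a := by
  unfold H18
  rw [Set.mem_setOf_eq, mem_S18_iff]
  unfold Pp
  omega

lemma H18_eq (a b : ℕ) : H18 a b = ↑(Hfin a b) := by
  ext v
  rw [mem_H18_iff]
  simp only [Hfin, Finset.coe_biUnion, Finset.mem_coe, Finset.mem_range, Set.mem_iUnion,
    Finset.mem_image, Finset.mem_Ioc]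
  constructor
  · rintro ⟨h1, h2, h3⟩
    exact ⟨v 1, by omega, v 0, ⟨h1, h2⟩, ((vec_eq_iff v (v 0) (v 1)).2 ⟨rfl, rfl⟩).symm⟩
  · rintro ⟨y, hy, x, ⟨hx1, hx2⟩, rfl⟩
    simp only [Matrix.cons_val_zero, Matrix.cons_val_one, Matrix.head_cons]
    omega

lemma Hfin_card (a b : ℕ) : (Hfin a b).card = ∑ y ∈ Finset.range (a + 1), (b - y) := by
  unfold Hfin
  rw [Finset.card_biUnion]
  · refine Finset.sum_congr rfl fun y _ => ?_
    rw [Finset.card_image_of_injective, Nat.card_Ioc]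
    intro x x' h
    have := congrFun h 0
    simpa using this
  · intro y _ y' _ hne
    simp only [Finset.disjoint_left, Finset.mem_image, Finset.mem_Ioc]
    rintro v ⟨x, _, rfl⟩ ⟨x', _, h⟩
    have := congrFun h 1
    simp at this
    exact hne this.symm

lemma sum_formula (a b : ℕ) (hab : a ≤ b) :
    2 * ∑ y ∈ Finset.range (a + 1), (b - y) = (1 + a) * (2 * b - a) := by
  induction a with
  | zero => simp
  | succ n ih =>
    rw [Finset.sum_range_succ, Nat.mul_add, ih (by omega)]
    zify [show n ≤ 2 * b by omega, show n + 1 ≤ b by omega, show n + 1 ≤ 2 * b by omega]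
    ring

/-- Parametrization of the minimal generating set. -/
def fG (a b j : ℕ) : Fin 2 → ℕ :=
  if j = 0 then ![1, 1] else if j ≤ b + 1 then ![b + j, 0]
  else if j ≤ a + b + 1 then ![b + 1, j - b - 1] else ![j - b, a + 1]

lemma fG0 (a b j : ℕ) : fG a b j 0 =
    if j = 0 then 1 else if j ≤ b + 1 then b + j else if j ≤ a + b + 1 then b + 1 else j - b := by
  unfold fG; split_ifs <;> simp

lemma fG1 (a b j : ℕ) : fG a b j 1 =
    if j = 0 then 1 else if j ≤ b + 1 then 0 else if j ≤ a + b + 1 then j - b - 1 else a + 1 := by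
  unfold fG; split_ifs <;> simp

lemma Gp_iff_image (a b : ℕ) (hab : a < b) (v : Fin 2 → ℕ) :
    Gp a b (v 0) (v 1) ↔ v ∈ fG a b '' ↑(Finset.range (2 * b + 2)) := by
  simp only [Set.mem_image, Finset.mem_coe, Finset.mem_range]
  constructor
  · intro h
    rcases h with ⟨h1, h2⟩ | ⟨h1, h2, h3⟩ | ⟨h1, h2, h3⟩ | ⟨h1, h2, h3⟩
    · exact ⟨0, by omega, by rw [vec_ext_iff, fG0, fG1]; constructor <;> (split_ifs <;> omega)⟩
    · exact ⟨v 0 - b, by omega, by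
        rw [vec_ext_iff, fG0, fG1]; constructor <;> (split_ifs <;> omega)⟩
    · exact ⟨b + 1 + v 1, by omega, by
        rw [vec_ext_iff, fG0, fG1]; constructor <;> (split_ifs <;> omega)⟩
    · exact ⟨v 0 + b, by omega, by
        rw [vec_ext_iff, fG0, fG1]; constructor <;> (split_ifs <;> omega)⟩
  · rintro ⟨j, hj, rfl⟩
    rw [fG0, fG1]
    unfold Gp
    split_ifs <;> omega

lemma fG_injOn (a b : ℕ) (hab : a < b) :
    Set.InjOn (fG a b) ↑(Finset.range (2 * b + 2)) := by
  intro j hj k hk h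
  simp only [Finset.mem_coe, Finset.mem_range] at hj hk
  have h0 := congrFun h 0
  have h1 := congrFun h 1
  rw [fG0, fG0, fG1, fG1] at *
  split_ifs at h0 h1 <;> omega

theorem stmt18 (a b : ℕ) (hab : a < b) :
    IsSubmonoidSet (S18 a b) ∧
    (∀ v ∈ S18 a b, v 1 ≤ v 0) ∧
    (H18 a b).Finite ∧
    minGens (S18 a b) =
      (({![1, 1]} ∪ {v | ∃ i : ℕ, b + 1 ≤ i ∧ i ≤ 2 * b + 1 ∧ v = ![i, 0]})
          ∪ {v | ∃ i : ℕ, 1 ≤ i ∧ i ≤ a ∧ v = ![b + 1, i]})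
        ∪ {v | ∃ i : ℕ, a + 2 ≤ i ∧ i ≤ b + 1 ∧ v = ![i, a + 1]} ∧
    (minGens (S18 a b)).ncard = 2 * b + 2 ∧
    (H18 a b).ncard = (1 + a) * (2 * b - a) / 2 := by
  have hmg : minGens (S18 a b) = fG a b '' ↑(Finset.range (2 * b + 2)) := by
    ext v
    rw [minGens, Set.mem_setOf_eq, mingen_iff a b hab, Gp_iff_image a b hab]
  refine ⟨⟨?_, ?_⟩, ?_, ?_, ?_, ?_, ?_⟩
  · exact Or.inl ⟨0, by simp⟩
  · intro u hu w hw
    rw [mem_S18_iff] at hu hw ⊢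
    have e0 : (u + w) 0 = u 0 + w 0 := rfl
    have e1 : (u + w) 1 = u 1 + w 1 := rfl
    unfold Pp at hu hw ⊢
    rw [e0, e1]
    omega
  · intro v hv
    rw [mem_S18_iff] at hv
    exact hv.1
  · rw [H18_eq]
    exact (Hfin a b).finite_toSet
  · ext v
    rw [minGens, Set.mem_setOf_eq, mingen_iff a b hab]
    simp only [Set.mem_union, Set.mem_singleton_iff, Set.mem_setOf_eq, vec_eq_iff]
    unfold Gp
    constructor
    · rintro (⟨h1, h2⟩ | ⟨h1, h2, h3⟩ | ⟨h1, h2, h3⟩ | ⟨h1, h2, h3⟩)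
      · exact Or.inl (Or.inl (Or.inl ⟨h1, h2⟩))
      · exact Or.inl (Or.inl (Or.inr ⟨v 0, h1, h2, rfl, h3⟩))
      · exact Or.inl (Or.inr ⟨v 1, h2, h3, h1, rfl⟩)
      · exact Or.inr ⟨v 0, h1, h2, rfl, h3⟩
    · rintro (((⟨h1, h2⟩ | ⟨i, h1, h2, h3, h4⟩) | ⟨i, h1, h2, h3, h4⟩) | ⟨i, h1, h2, h3, h4⟩) <;>
        omega
  · rw [hmg, Set.ncard_image_of_injOn (fG_injOn a b hab), Set.ncard_coe_finset,
      Finset.card_range]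
  · rw [H18_eq, Set.ncard_coe_finset, Hfin_card]
    have := sum_formula a b (le_of_lt hab)
    omega
end
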